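/- arXiv:1108.1324 — 5 statements merged into one kernel-verified Lean document; each statement's English description precedes it below -/
import Mathlib

section
/- Let (X,d,μ) be a metric measure space with μ Borel regular, doubling and σ-finite. If the differentials have dimension at most N₀, i.e. every (N₀+1)-tuple of real-valued Lipschitz functions on X is dependent to first order at μ-almost every point, then X admits a measurable differentiable structure whose dimension is at most N₀. -/
open Metric MeasureTheory Filter Set
open scoped NNReal ENNReal

/-- The variation of `f` on the ball `B(x,r)`: `sup { |f y - f x| / r : y ∈ B(x,r) }`. -/
noncomputable def varBall {X : Type*} [MetricSpace X] (f : X → ℝ) (x : X) (r : ℝ) : ℝ :=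
  sSup ((fun y => |f y - f x| / r) '' Metric.ball x r)

/-- Lower pointwise Lipschitz constant `lip_x f`. -/
noncomputable def lipLow {X : Type*} [MetricSpace X] (f : X → ℝ) (x : X) : ℝ :=
  Filter.liminf (fun r => varBall f x r) (nhdsWithin 0 (Set.Ioi (0:ℝ)))

/-- Upper pointwise Lipschitz constant `Lip_x f`. -/
noncomputable def lipUp {X : Type*} [MetricSpace X] (f : X → ℝ) (x : X) : ℝ :=
  Filter.limsup (fun r => varBall f x r) (nhdsWithin 0 (Set.Ioi (0:ℝ)))

/-- `f` is a real-valued Lipschitz function. -/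
def IsLip {X : Type*} [MetricSpace X] (f : X → ℝ) : Prop := ∃ K : ℝ≥0, LipschitzWith K f

/-- `μ` is doubling with constant `C`. -/
def DoublingWith {X : Type*} [MetricSpace X] [MeasurableSpace X] (μ : Measure X) (C : ℝ≥0) :
    Prop :=
  ∀ (x : X) (r : ℝ), 0 < r → μ (Metric.ball x (2 * r)) ≤ (C : ℝ≥0∞) * μ (Metric.ball x r)

/-- `(X, μ)` admits a `p`-Poincaré inequality with constant `L`. -/
def PoincareIneq {X : Type*} [MetricSpace X] [MeasurableSpace X] (μ : Measure X) (p L : ℝ) :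
    Prop :=
  (∀ (x : X) (r : ℝ), 0 < r → 0 < μ (Metric.ball x r) ∧ μ (Metric.ball x r) < ⊤) ∧
  ∀ f : X → ℝ, IsLip f → ∀ (x : X) (r : ℝ), 0 < r →
    ⨍ y in Metric.ball x r, |f y - ⨍ z in Metric.ball x r, f z ∂μ| ∂μ ≤
      L * r * (⨍ z in Metric.ball x (L * r), (lipLow f z) ^ p ∂μ) ^ (1 / p)

/-- An `N`-tuple of functions is dependent to first order at `x`. -/
def DependentAt {X : Type*} [MetricSpace X] {N : ℕ} (f : Fin N → X → ℝ) (x : X) : Prop :=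
  ∃ l : Fin N → ℝ, l ≠ 0 ∧ lipUp (fun y => ∑ i, l i * f i y) x = 0

/-- A measurable differentiable structure of dimension at most `N₀`. -/
def HasMDS {X : Type*} [MetricSpace X] [MeasurableSpace X] (μ : Measure X) (N₀ : ℕ) : Prop :=
  ∃ (ι : Type) (_ : Countable ι) (U : ι → Set X) (N : ι → ℕ)
      (φ : (i : ι) → Fin (N i) → X → ℝ),
    (∀ i, MeasurableSet (U i) ∧ 0 < μ (U i)) ∧
    μ (Set.univ \ ⋃ i, U i) = 0 ∧
    (∀ i, N i ≤ N₀) ∧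
    (∀ i k, IsLip (φ i k)) ∧
    (∀ f : X → ℝ, IsLip f → ∀ i, ∃ df : X → (Fin (N i) → ℝ),
      Measurable df ∧
      (∀ᵐ x ∂(μ.restrict (U i)),
        lipUp (fun y => f y - ∑ k, df x k * φ i k y) x = 0) ∧
      ∀ dg : X → (Fin (N i) → ℝ), Measurable dg →
        (∀ᵐ x ∂(μ.restrict (U i)),
          lipUp (fun y => f y - ∑ k, dg x k * φ i k y) x = 0) →
        (∀ᵐ x ∂(μ.restrict (U i)), df x = dg x))

/-! Take a Lipschitz tuple `φ` of maximal length `N ≤ N₀` that is independent to first order on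
a set of positive measure inside a given set `R`. Independence is made quantitative by
`indepSet φ m`, where the seminorm `l ↦ Lip_x (l · φ)` dominates `‖l‖ / (m + 1)`; such sets are
measurable and exhaust the points where `φ` is independent. By maximality, for every Lipschitz `f`
the tuple `(φ, f)` is dependent almost everywhere on `R`, so `f - c · φ` has vanishing `Lip_x` for
some `c`; on `indepSet φ m` this `c` is unique and bounded by `(m + 1) Lip f`, and compactness of
balls in `ℝ^N` makes it a measurable function of `x`. A maximal disjoint family of these patches
is countable because `μ` is σ-finite, and it covers `X` up to a null set by maximality. -/

open Topology

section LipUp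

variable {X : Type*} [MetricSpace X] {f g : X → ℝ} {x : X} {r : ℝ} {K : ℝ≥0}

lemma IsLip.add (hf : IsLip f) (hg : IsLip g) : IsLip (f + g) :=
  let ⟨_, hf⟩ := hf; let ⟨_, hg⟩ := hg; ⟨_, hf.add hg⟩

lemma IsLip.sub (hf : IsLip f) (hg : IsLip g) : IsLip (f - g) :=
  let ⟨_, hf⟩ := hf; let ⟨_, hg⟩ := hg; ⟨_, hf.sub hg⟩

lemma IsLip.neg (hf : IsLip f) : IsLip (-f) :=
  let ⟨_, hf⟩ := hf; ⟨_, hf.neg⟩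

lemma IsLip.const_smul (hf : IsLip f) (c : ℝ) : IsLip (c • f) :=
  let ⟨_, hf⟩ := hf; ⟨_, (lipschitzWith_smul c).comp hf⟩

lemma varBall_nonneg (g : X → ℝ) (x : X) (r : ℝ) : 0 ≤ varBall g x r :=
  Real.sSup_nonneg <| by
    rintro _ ⟨y, hy, rfl⟩
    exact div_nonneg (abs_nonneg _) (pos_of_mem_ball hy).le

lemma LipschitzWith.div_le_of_mem_ball (hg : LipschitzWith K g) {y : X} (hy : y ∈ ball x r) :
    |g y - g x| / r ≤ K := by
  rw [div_le_iff₀ (pos_of_mem_ball hy), ← Real.dist_eq]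
  exact (hg.dist_le_mul y x).trans (by gcongr; exact (mem_ball.mp hy).le)

lemma LipschitzWith.varBall_le (hg : LipschitzWith K g) (x : X) (r : ℝ) : varBall g x r ≤ K :=
  Real.sSup_le (by rintro _ ⟨y, hy, rfl⟩; exact hg.div_le_of_mem_ball hy) K.coe_nonneg

lemma IsLip.le_varBall (hg : IsLip g) {y : X} (hy : y ∈ ball x r) :
    |g y - g x| / r ≤ varBall g x r :=
  let ⟨_, hg⟩ := hg
  le_csSup ⟨_, by rintro _ ⟨z, hz, rfl⟩; exact hg.div_le_of_mem_ball hz⟩ ⟨y, hy, rfl⟩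

lemma varBall_const_smul (c : ℝ) (g : X → ℝ) (x : X) (r : ℝ) :
    varBall (c • g) x r = |c| * varBall g x r := by
  rw [varBall, varBall, ← smul_eq_mul, ← Real.sSup_smul_of_nonneg (abs_nonneg c), ← Set.image_smul,
    Set.image_image]
  congr! 2 with y
  simp only [Pi.smul_apply, smul_eq_mul, ← mul_sub, abs_mul, mul_div_assoc]

lemma isCoboundedUnder_varBall (g : X → ℝ) (x : X) :
    IsCoboundedUnder (· ≤ ·) (𝓝[>] 0) (varBall g x) :=
  (isBoundedUnder_of_eventually_ge (.of_forall (varBall_nonneg g x))).isCoboundedUnder_le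

lemma IsLip.isBoundedUnder_varBall (hg : IsLip g) (x : X) :
    IsBoundedUnder (· ≤ ·) (𝓝[>] 0) (varBall g x) :=
  let ⟨_, hg⟩ := hg; isBoundedUnder_of_eventually_le (.of_forall (hg.varBall_le x))

lemma IsLip.lipUp_nonneg (hg : IsLip g) (x : X) : 0 ≤ lipUp g x :=
  le_limsup_of_frequently_le (.of_forall (varBall_nonneg g x)) (hg.isBoundedUnder_varBall x)

lemma LipschitzWith.lipUp_le (hg : LipschitzWith K g) (x : X) : lipUp g x ≤ K :=
  limsup_le_of_le (isCoboundedUnder_varBall g x) (.of_forall (hg.varBall_le x))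

lemma IsLip.varBall_add_le (hf : IsLip f) (hg : IsLip g) (x : X) (r : ℝ) :
    varBall (f + g) x r ≤ varBall f x r + varBall g x r := by
  refine Real.sSup_le ?_ (add_nonneg (varBall_nonneg f x r) (varBall_nonneg g x r))
  rintro _ ⟨y, hy, rfl⟩
  calc |(f + g) y - (f + g) x| / r ≤ |f y - f x| / r + |g y - g x| / r := by
        rw [← add_div]
        gcongr
        · exact (pos_of_mem_ball hy).le
        · simpa only [Pi.add_apply, add_sub_add_comm] using abs_add_le _ _
    _ ≤ varBall f x r + varBall g x r := add_le_add (hf.le_varBall hy) (hg.le_varBall hy)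

lemma IsLip.lipUp_add_le (hf : IsLip f) (hg : IsLip g) (x : X) :
    lipUp (f + g) x ≤ lipUp f x + lipUp g x :=
  (limsup_le_limsup (.of_forall (hf.varBall_add_le hg x)) (isCoboundedUnder_varBall _ x)
      (isBoundedUnder_le_add (hf.isBoundedUnder_varBall x) (hg.isBoundedUnder_varBall x))).trans
    (limsup_add_le (isBoundedUnder_of_eventually_ge (.of_forall (varBall_nonneg f x)))
      (hf.isBoundedUnder_varBall x) (isCoboundedUnder_varBall g x) (hg.isBoundedUnder_varBall x))

lemma IsLip.lipUp_const_smul (hg : IsLip g) (c : ℝ) (x : X) :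
    lipUp (c • g) x = |c| * lipUp g x := by
  simp only [lipUp, varBall_const_smul]
  exact ((monotone_mul_left_of_nonneg (abs_nonneg c)).map_limsup_of_continuousAt (varBall g x)
    (continuous_const_mul _).continuousAt (hg.isBoundedUnder_varBall x)
    (isCoboundedUnder_varBall g x)).symm

lemma IsLip.lipUp_neg (hg : IsLip g) (x : X) : lipUp (-g) x = lipUp g x := by
  simpa using hg.lipUp_const_smul (-1) x

lemma IsLip.lipUp_sub_le (hf : IsLip f) (hg : IsLip g) (x : X) :
    lipUp (f - g) x ≤ lipUp f x + lipUp g x := by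
  simpa only [sub_eq_add_neg, hg.lipUp_neg] using hf.lipUp_add_le hg.neg x

lemma IsLip.abs_lipUp_sub_lipUp_le (hf : IsLip f) (hg : IsLip g) (x : X) :
    |lipUp f x - lipUp g x| ≤ lipUp (f - g) x := by
  have hfg := hf.sub hg
  have h₁ := hg.lipUp_add_le hfg x
  have h₂ := hf.lipUp_add_le hfg.neg x
  rw [add_sub_cancel] at h₁
  rw [hfg.lipUp_neg, ← sub_eq_add_neg, sub_sub_cancel] at h₂
  rw [abs_sub_le_iff]
  constructor <;> linarith

end LipUp

section Measurability

variable {X : Type*} [MetricSpace X] {g : X → ℝ}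

lemma IsLip.lowerSemicontinuous_varBall (hg : IsLip g) (r : ℝ) :
    LowerSemicontinuous fun x => varBall g x r := by
  intro x t ht
  rcases ((fun y => |g y - g x| / r) '' ball x r).eq_empty_or_nonempty with h | h
  · simp only [varBall, h, Real.sSup_empty] at ht
    exact .of_forall fun x' => ht.trans_le (varBall_nonneg g x' r)
  obtain ⟨_, ⟨y, hy, rfl⟩, hty⟩ := exists_lt_of_lt_csSup h ht
  have ⟨K, hK⟩ := hg
  have hy' : ∀ᶠ x' in 𝓝 x, dist y x' < r :=
    (continuous_const.dist continuous_id).continuousAt.eventually_lt continuousAt_const hy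
  have hty' : ∀ᶠ x' in 𝓝 x, t < |g y - g x'| / r :=
    continuousAt_const.eventually_lt
      ((continuous_const.sub hK.continuous).abs.div_const r).continuousAt hty
  filter_upwards [hy', hty'] with x' hx' htx'
  exact htx'.trans_le (hg.le_varBall hx')

lemma IsLip.lipUp_eq_iInf_iSup (hg : IsLip g) (x : X) :
    lipUp g x = ⨅ n : ℕ, ⨆ r : Ioo (0 : ℝ) (1 / (n + 1)), varBall g x r := by
  have ⟨K, hK⟩ := hg
  have hbdd : ∀ ε, BddAbove (range fun r : Ioo (0 : ℝ) ε => varBall g x r) := fun ε =>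
    ⟨K, by rintro _ ⟨r, rfl⟩; exact hK.varBall_le x r⟩
  refine le_antisymm (le_ciInf fun n => ?_) (le_of_forall_gt_imp_ge_of_dense fun b hb => ?_)
  · refine limsup_le_of_le (isCoboundedUnder_varBall g x) ?_
    filter_upwards [Ioo_mem_nhdsGT (by positivity : (0 : ℝ) < 1 / (n + 1))] with r hr
    exact le_ciSup (hbdd _) ⟨r, hr⟩
  · obtain ⟨u, hu, hsub⟩ := mem_nhdsGT_iff_exists_Ioo_subset.mp
      (eventually_lt_of_limsup_lt hb (hg.isBoundedUnder_varBall x))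
    obtain ⟨n, hn⟩ := exists_nat_one_div_lt (show 0 < u from hu)
    refine (ciInf_le ⟨0, ?_⟩ n).trans (Real.iSup_le (fun r => (hsub ⟨r.2.1, r.2.2.trans hn⟩).le)
      ((hg.lipUp_nonneg x).trans hb.le))
    rintro _ ⟨m, rfl⟩
    exact Real.iSup_nonneg fun r => varBall_nonneg g x r

variable [MeasurableSpace X] [OpensMeasurableSpace X]

lemma IsLip.measurable_lipUp (hg : IsLip g) : Measurable (lipUp g) := by
  rw [funext hg.lipUp_eq_iInf_iSup]
  have ⟨K, hK⟩ := hg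
  exact .iInf fun n => (lowerSemicontinuous_ciSup
    (f := fun (r : Ioo (0 : ℝ) (1 / (n + 1))) x => varBall g x r)
    (fun x => ⟨K, by rintro _ ⟨r, rfl⟩; exact hK.varBall_le x r⟩)
    fun r => hg.lowerSemicontinuous_varBall r).measurable

end Measurability

lemma measurableSet_setOf_forall_le {α E : Type*} [MeasurableSpace α] [TopologicalSpace E]
    [TopologicalSpace.SeparableSpace E] {u v : α → E → ℝ} (hu : ∀ e, Measurable fun a => u a e)
    (hv : ∀ e, Measurable fun a => v a e) (hcu : ∀ a, Continuous (u a))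
    (hcv : ∀ a, Continuous (v a)) : MeasurableSet {a | ∀ e, u a e ≤ v a e} := by
  obtain ⟨D, hDc, hD⟩ := TopologicalSpace.exists_countable_dense E
  convert MeasurableSet.biInter hDc fun e _ => measurableSet_le (hu e) (hv e) using 1
  ext a
  simp only [mem_ofPred_eq, mem_iInter]
  refine ⟨fun h e _ => h e, fun h e => ?_⟩
  have : closure D ⊆ {e | u a e ≤ v a e} := closure_minimal h (isClosed_le (hcu a) (hcv a))
  exact this (hD.closure_eq ▸ mem_univ e)

lemma IsCompact.exists_eq_zero_of_forall_exists_lt {V : Type*} [TopologicalSpace V] {K : Set V}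
    (hK : IsCompact K) {F : V → ℝ} (hF : ContinuousOn F K) (h0 : ∀ c ∈ K, 0 ≤ F c)
    (h : ∀ n : ℕ, ∃ c ∈ K, F c < 1 / (n + 1)) : ∃ c ∈ K, F c = 0 := by
  obtain ⟨c₀, hc₀, -⟩ := h 0
  obtain ⟨c, hc, hmin⟩ := hK.exists_isMinOn ⟨c₀, hc₀⟩ hF
  refine ⟨c, hc, le_antisymm (le_of_forall_gt_imp_ge_of_dense fun ε hε => ?_) (h0 c hc)⟩
  obtain ⟨n, hn⟩ := exists_nat_one_div_lt hε
  obtain ⟨c', hc', hlt⟩ := h n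
  exact (hmin hc').trans (hlt.trans hn).le

section MeasurableSelection

variable {α V : Type*} [MeasurableSpace α] [TopologicalSpace V]
  [TopologicalSpace.PseudoMetrizableSpace V] {K : Set V} {F : α → V → ℝ}

lemma measurableSet_setOf_exists_eq_zero (hK : IsCompact K) (hFm : ∀ c, Measurable fun x => F x c)
    (hFc : ∀ x, Continuous (F x)) (h0 : ∀ x c, 0 ≤ F x c) :
    MeasurableSet {x | ∃ c ∈ K, F x c = 0} := by
  obtain ⟨D, hDK, hDc, hKD⟩ := hK.isSeparable.exists_countable_dense_subset
  -- By compactness, `F x` vanishes on `K` iff it is below every `1 / (n + 1)` somewhere on `D`.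
  convert MeasurableSet.iInter fun n : ℕ => MeasurableSet.biUnion hDc
    fun c _ => measurableSet_lt (hFm c) (measurable_const (a := 1 / ((n : ℝ) + 1))) using 1
  ext x
  simp only [mem_ofPred_eq, mem_iInter, mem_iUnion, exists_prop]
  refine ⟨fun ⟨c, hc, hc0⟩ n => ?_, fun h => ?_⟩
  · obtain ⟨d, hd, hdD⟩ := mem_closure_iff.mp (hKD hc) {c' | F x c' < 1 / (n + 1)}
      (isOpen_lt (hFc x) continuous_const) (by simp only [mem_ofPred_eq, hc0]; positivity)
    exact ⟨d, hdD, hd⟩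
  · exact hK.exists_eq_zero_of_forall_exists_lt (hFc x).continuousOn (fun c _ => h0 x c)
      fun n => let ⟨d, hdD, hd⟩ := h n; ⟨d, hDK hdD, hd⟩

lemma exists_measurable_eq_of_eq_zero [MeasurableSpace V] [BorelSpace V] [Nonempty V] {A : Set α}
    (hA : MeasurableSet A) (hK : IsCompact K) (hFm : ∀ c, Measurable fun x => F x c)
    (hFc : ∀ x, Continuous (F x)) (h0 : ∀ x c, 0 ≤ F x c)
    (huniq : ∀ x ∈ A, ∀ c c', F x c = 0 → F x c' = 0 → c = c') :
    ∃ d : α → V, Measurable d ∧ ∀ x ∈ A, ∀ c ∈ K, F x c = 0 → d x = c := by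
  classical
  set E := A ∩ {x | ∃ c ∈ K, F x c = 0}
  let d : α → V := fun x => if h : x ∈ E then h.2.choose else Classical.arbitrary V
  have hd : ∀ x (hx : x ∈ E), d x ∈ K ∧ F x (d x) = 0 := fun x hx => by
    simpa only [d, dif_pos hx] using hx.2.choose_spec
  refine ⟨d, measurable_of_isClosed fun C hC => ?_,
    fun x hx c hc hc0 => (huniq x hx _ _ (hd x ⟨hx, c, hc, hc0⟩).2 hc0)⟩
  -- By uniqueness, `d x ∈ C` for `x ∈ E` iff `F x` vanishes on the compact set `C ∩ K`.
  have : d ⁻¹' C = E.ite {x | ∃ c ∈ C ∩ K, F x c = 0} {_x | Classical.arbitrary V ∈ C} := by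
    ext x
    by_cases hx : x ∈ E
    · simp only [Set.ite, mem_preimage, mem_union, mem_inter_iff, Set.mem_sdiff, hx, and_true,
        not_true_eq_false, and_false, or_false, mem_ofPred_eq]
      refine ⟨fun h => ⟨d x, ⟨h, (hd x hx).1⟩, (hd x hx).2⟩, fun ⟨c, ⟨hcC, _⟩, hc0⟩ => ?_⟩
      exact huniq x hx.1 c (d x) hc0 (hd x hx).2 ▸ hcC
    · simp [Set.ite, hx, d]
  rw [this]
  exact (hA.inter (measurableSet_setOf_exists_eq_zero hK hFm hFc h0)).ite
    (measurableSet_setOf_exists_eq_zero (hK.inter_left hC) hFm hFc h0) (.const _)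

end MeasurableSelection

lemma Seminorm.exists_ne_zero_apply_eq_zero {E : Type*} [NormedAddCommGroup E] [NormedSpace ℝ E]
    [FiniteDimensional ℝ E] {p : Seminorm ℝ E} (hp : Continuous p)
    (h : ∀ n : ℕ, ∃ v, (n + 1) * p v < ‖v‖) : ∃ v ≠ (0 : E), p v = 0 := by
  have hsphere : ∀ n : ℕ, ∃ u ∈ sphere (0 : E) 1, p u < 1 / (n + 1) := fun n => by
    obtain ⟨v, hv⟩ := h n
    have hv0 : 0 < ‖v‖ := (mul_nonneg (by positivity) (apply_nonneg p v)).trans_lt hv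
    refine ⟨‖v‖⁻¹ • v, by simp [norm_smul, hv0.ne'], ?_⟩
    rw [map_smul_eq_mul, norm_inv, norm_norm, inv_mul_lt_iff₀ hv0, mul_one_div,
      lt_div_iff₀ (by positivity)]
    linarith
  obtain ⟨u, hu, hpu⟩ := (isCompact_sphere 0 1).exists_eq_zero_of_forall_exists_lt
    hp.continuousOn (fun u _ => apply_nonneg p u) hsphere
  exact ⟨u, fun h0 => by simp [h0] at hu, hpu⟩

section LinComb

variable {X : Type*} {N : ℕ}

def linComb (φ : Fin N → X → ℝ) : (Fin N → ℝ) →ₗ[ℝ] X → ℝ where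
  toFun l y := ∑ i, l i * φ i y
  map_add' l l' := by ext y; simp [add_mul, Finset.sum_add_distrib]
  map_smul' a l := by ext y; simp [Finset.mul_sum, mul_assoc]

lemma linComb_snoc (φ : Fin N → X → ℝ) (f : X → ℝ) (l : Fin (N + 1) → ℝ) :
    linComb (Fin.snoc φ f : Fin (N + 1) → X → ℝ) l =
      linComb φ (Fin.init l) + l (Fin.last N) • f := by
  ext y
  simp [linComb, Fin.sum_univ_castSucc, Fin.init]

variable [MetricSpace X] {φ : Fin N → X → ℝ} {f : X → ℝ} {x : X} {m : ℕ}

lemma lipschitzWith_linComb {K : Fin N → ℝ≥0} (hφ : ∀ i, LipschitzWith (K i) (φ i))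
    (l : Fin N → ℝ) : LipschitzWith (‖l‖₊ * ∑ i, K i) (linComb φ l) := by
  refine LipschitzWith.of_dist_le_mul fun y z => ?_
  simp only [linComb, LinearMap.coe_mk, AddHom.coe_mk, Real.dist_eq, ← Finset.sum_sub_distrib,
    ← mul_sub, NNReal.coe_mul, coe_nnnorm, NNReal.coe_sum, Finset.mul_sum, Finset.sum_mul]
  refine (Finset.abs_sum_le_sum_abs _ _).trans (Finset.sum_le_sum fun i _ => ?_)
  rw [abs_mul, mul_assoc, ← Real.dist_eq]
  exact mul_le_mul (norm_le_pi_norm l i) ((hφ i).dist_le_mul y z) dist_nonneg (norm_nonneg l)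

lemma isLip_linComb (hφ : ∀ i, IsLip (φ i)) (l : Fin N → ℝ) : IsLip (linComb φ l) := by
  choose K hK using hφ
  exact ⟨_, lipschitzWith_linComb hK l⟩

lemma continuous_lipUp_sub_linComb (hf : IsLip f) (hφ : ∀ i, IsLip (φ i)) (x : X) :
    Continuous fun c => lipUp (f - linComb φ c) x := by
  choose K hK using hφ
  refine (LipschitzWith.of_dist_le_mul (K := ∑ i, K i) fun c c' => ?_).continuous
  have hL := fun c => isLip_linComb (fun i => ⟨K i, hK i⟩) c
  calc dist (lipUp (f - linComb φ c) x) (lipUp (f - linComb φ c') x)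
      ≤ lipUp ((f - linComb φ c) - (f - linComb φ c')) x :=
        (hf.sub (hL c)).abs_lipUp_sub_lipUp_le (hf.sub (hL c')) x
    _ = lipUp (linComb φ (c' - c)) x := by rw [sub_sub_sub_cancel_left, map_sub]
    _ ≤ (‖c' - c‖₊ * ∑ i, K i : ℝ≥0) := (lipschitzWith_linComb hK _).lipUp_le x
    _ = (∑ i, K i : ℝ≥0) * dist c c' := by
        rw [NNReal.coe_mul, coe_nnnorm, ← dist_eq_norm, dist_comm, mul_comm]

noncomputable def lipSeminorm (hφ : ∀ i, IsLip (φ i)) (x : X) : Seminorm ℝ (Fin N → ℝ) :=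
  .of (fun l => lipUp (linComb φ l) x)
    (fun l l' => by
      simpa only [map_add] using (isLip_linComb hφ l).lipUp_add_le (isLip_linComb hφ l') x)
    (fun a l => by
      simpa only [map_smul, Real.norm_eq_abs] using (isLip_linComb hφ l).lipUp_const_smul a x)

lemma lipSeminorm_apply (hφ : ∀ i, IsLip (φ i)) (x : X) (l : Fin N → ℝ) :
    lipSeminorm hφ x l = lipUp (linComb φ l) x :=
  rfl

lemma continuous_lipSeminorm (hφ : ∀ i, IsLip (φ i)) (x : X) : Continuous (lipSeminorm hφ x) := by
  convert (continuous_lipUp_sub_linComb (f := 0) ⟨0, LipschitzWith.const 0⟩ hφ x).comp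
    continuous_neg using 1
  ext l
  simp [lipSeminorm_apply]

def indepSet (φ : Fin N → X → ℝ) (m : ℕ) : Set X :=
  {x | ∀ l, ‖l‖ ≤ (m + 1) * lipUp (linComb φ l) x}

lemma not_dependentAt_of_mem_indepSet (hx : x ∈ indepSet φ m) : ¬ DependentAt φ x := by
  rintro ⟨l, hl0, hl⟩
  have := hx l
  rw [show lipUp (linComb φ l) x = 0 from hl, mul_zero] at this
  exact hl0 (norm_le_zero_iff.mp this)

lemma dependentAt_of_forall_notMem_indepSet (hφ : ∀ i, IsLip (φ i))
    (hx : ∀ m, x ∉ indepSet φ m) : DependentAt φ x :=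
  (lipSeminorm hφ x).exists_ne_zero_apply_eq_zero (continuous_lipSeminorm hφ x) fun n => by
    simpa [indepSet, lipSeminorm_apply] using hx n

lemma measurableSet_indepSet [MeasurableSpace X] [OpensMeasurableSpace X]
    (hφ : ∀ i, IsLip (φ i)) (m : ℕ) : MeasurableSet (indepSet φ m) :=
  measurableSet_setOf_forall_le (fun _ => measurable_const)
    (fun l => (isLip_linComb hφ l).measurable_lipUp.const_mul _) (fun _ => continuous_norm)
    (fun x => continuous_const.mul (continuous_lipSeminorm hφ x))

lemma norm_sub_le_of_mem_indepSet (hφ : ∀ i, IsLip (φ i)) (hf : IsLip f)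
    (hx : x ∈ indepSet φ m) (c c' : Fin N → ℝ) :
    ‖c - c'‖ ≤ (m + 1) * (lipUp (f - linComb φ c') x + lipUp (f - linComb φ c) x) :=
  calc ‖c - c'‖ ≤ (m + 1) * lipUp (linComb φ (c - c')) x := hx _
    _ = (m + 1) * lipUp ((f - linComb φ c') - (f - linComb φ c)) x := by
        rw [sub_sub_sub_cancel_left, map_sub]
    _ ≤ _ := by
        gcongr
        exact (hf.sub (isLip_linComb hφ c')).lipUp_sub_le (hf.sub (isLip_linComb hφ c)) x

lemma exists_lipUp_sub_linComb_eq_zero (hφ : ∀ i, IsLip (φ i)) (hf : IsLip f)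
    (hind : ¬ DependentAt φ x) (hdep : DependentAt (Fin.snoc φ f : Fin (N + 1) → X → ℝ) x) :
    ∃ c, lipUp (f - linComb φ c) x = 0 := by
  obtain ⟨l, hl0, hl⟩ := hdep
  change lipUp (linComb _ l) x = 0 at hl
  rw [linComb_snoc] at hl
  rcases eq_or_ne (l (Fin.last N)) 0 with ha | ha
  · refine absurd ⟨Fin.init l, fun h => hl0 ?_,
      (by simpa [ha] using hl : lipUp (linComb φ (Fin.init l)) x = 0)⟩ hind
    rw [← Fin.snoc_init_self l, h, ha]
    ext i
    refine Fin.lastCases ?_ (fun j => ?_) i <;> simp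
  · refine ⟨-(l (Fin.last N))⁻¹ • Fin.init l, ?_⟩
    have : f - linComb φ (-(l (Fin.last N))⁻¹ • Fin.init l) =
        (l (Fin.last N))⁻¹ • (linComb φ (Fin.init l) + l (Fin.last N) • f) := by
      rw [map_smul, smul_add, smul_smul, inv_mul_cancel₀ ha, one_smul, neg_smul, sub_neg_eq_add,
        add_comm]
    rw [this, ((isLip_linComb hφ _).add (hf.const_smul _)).lipUp_const_smul, hl, mul_zero]

end LinComb

section CoordPatch

variable {X : Type*} [MetricSpace X] [MeasurableSpace X]
  {μ : Measure X} {N : ℕ} {φ : Fin N → X → ℝ} {f : X → ℝ} {m : ℕ} {R S : Set X}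

def AEDependentOn (μ : Measure X) (R : Set X) (N : ℕ) : Prop :=
  ∀ φ : Fin N → X → ℝ, (∀ i, IsLip (φ i)) → ∀ᵐ x ∂μ, x ∈ R → DependentAt φ x

lemma not_aeDependentOn_zero (hR : 0 < μ R) : ¬ AEDependentOn μ R 0 := fun h => by
  refine hR.ne' (measure_eq_zero_iff_ae_notMem.mpr ?_)
  filter_upwards [h Fin.elim0 fun i => i.elim0] with x hx hxR
  obtain ⟨l, hl0, -⟩ := hx hxR
  exact hl0 (Subsingleton.elim _ _)

lemma exists_maximal_not_aeDependentOn {N₀ : ℕ} (hdim : AEDependentOn μ R (N₀ + 1))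
    (hR : 0 < μ R) : ∃ N ≤ N₀, ¬ AEDependentOn μ R N ∧ AEDependentOn μ R (N + 1) := by
  classical
  set P := fun N => ¬ AEDependentOn μ R N
  refine ⟨Nat.findGreatest P N₀, Nat.findGreatest_le N₀,
    Nat.findGreatest_spec (P := P) (Nat.zero_le N₀) (not_aeDependentOn_zero hR), ?_⟩
  rcases (Nat.findGreatest_le (P := P) N₀).eq_or_lt with h | h
  · rwa [h]
  · exact not_not.mp (Nat.findGreatest_is_greatest (Nat.lt_succ_self _) h)

lemma exists_pos_measure_inter_indepSet (hφ : ∀ i, IsLip (φ i))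
    (h : ¬ ∀ᵐ x ∂μ, x ∈ R → DependentAt φ x) : ∃ m, 0 < μ (R ∩ indepSet φ m) := by
  by_contra! hnull
  refine h ?_
  filter_upwards [ae_all_iff.mpr fun m => measure_eq_zero_iff_ae_notMem.mp
    (nonpos_iff_eq_zero.mp (hnull m))] with x hx hxR
  exact dependentAt_of_forall_notMem_indepSet hφ fun m hm => hx m ⟨hxR, hm⟩

def IsCoordPatch (μ : Measure X) (N₀ : ℕ) (S : Set X) : Prop :=
  MeasurableSet S ∧ 0 < μ S ∧ ∃ N ≤ N₀, ∃ φ : Fin N → X → ℝ, (∀ i, IsLip (φ i)) ∧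
    ∀ f : X → ℝ, IsLip f → ∃ df : X → (Fin N → ℝ), Measurable df ∧
      (∀ᵐ x ∂μ.restrict S, lipUp (f - linComb φ (df x)) x = 0) ∧
      ∀ dg : X → (Fin N → ℝ), (∀ᵐ x ∂μ.restrict S, lipUp (f - linComb φ (dg x)) x = 0) →
        ∀ᵐ x ∂μ.restrict S, df x = dg x

variable [OpensMeasurableSpace X]

lemma exists_measurable_differential (hφ : ∀ i, IsLip (φ i)) (hS : MeasurableSet S)
    (hSm : S ⊆ indepSet φ m) (hf : IsLip f)
    (hae : ∀ᵐ x ∂μ, x ∈ S → ∃ c, lipUp (f - linComb φ c) x = 0) :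
    ∃ df : X → (Fin N → ℝ), Measurable df ∧
      (∀ᵐ x ∂μ.restrict S, lipUp (f - linComb φ (df x)) x = 0) ∧
      ∀ dg : X → (Fin N → ℝ), (∀ᵐ x ∂μ.restrict S, lipUp (f - linComb φ (dg x)) x = 0) →
        ∀ᵐ x ∂μ.restrict S, df x = dg x := by
  have ⟨Kf, hKf⟩ := hf
  have hLip : ∀ c, IsLip (f - linComb φ c) := fun c => hf.sub (isLip_linComb hφ c)
  have huniq : ∀ x ∈ S, ∀ c c', lipUp (f - linComb φ c) x = 0 →
      lipUp (f - linComb φ c') x = 0 → c = c' := fun x hx c c' hc hc' =>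
    sub_eq_zero.mp <| norm_le_zero_iff.mp <| by
      simpa [hc, hc'] using norm_sub_le_of_mem_indepSet hφ hf (hSm hx) c c'
  have hbound : ∀ x ∈ S, ∀ c, lipUp (f - linComb φ c) x = 0 →
      c ∈ closedBall 0 ((m + 1) * Kf) := fun x hx c hc => by
    have := norm_sub_le_of_mem_indepSet hφ hf (hSm hx) c 0
    simp only [map_zero, sub_zero, hc, add_zero] at this
    exact mem_closedBall_zero_iff.mpr (this.trans (by gcongr; exact hKf.lipUp_le x))
  obtain ⟨df, hdf, hdf_eq⟩ := exists_measurable_eq_of_eq_zero hS (isCompact_closedBall _ _)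
    (fun c => (hLip c).measurable_lipUp) (continuous_lipUp_sub_linComb hf hφ)
    (fun x c => (hLip c).lipUp_nonneg x) huniq
  have hae' := (ae_restrict_iff' hS).mpr hae
  refine ⟨df, hdf, ?_, fun dg hdg => ?_⟩
  · filter_upwards [hae', ae_restrict_mem hS] with x ⟨c, hc⟩ hx
    rwa [hdf_eq x hx c (hbound x hx c hc) hc]
  · filter_upwards [hae', hdg, ae_restrict_mem hS] with x ⟨c, hc⟩ hdgx hx
    rw [hdf_eq x hx c (hbound x hx c hc) hc]
    exact huniq x hx c (dg x) hc hdgx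

lemma exists_isCoordPatch_subset {N₀ : ℕ}
    (hdim : ∀ φ : Fin (N₀ + 1) → X → ℝ, (∀ i, IsLip (φ i)) → ∀ᵐ x ∂μ, DependentAt φ x)
    (hR : MeasurableSet R) (hpos : 0 < μ R) : ∃ S ⊆ R, IsCoordPatch μ N₀ S := by
  obtain ⟨N, hN, hind, hdep⟩ := exists_maximal_not_aeDependentOn
    (fun φ hφ => (hdim φ hφ).mono fun x hx _ => hx) hpos
  simp only [AEDependentOn, not_forall] at hind
  obtain ⟨φ, hφ, hφR⟩ := hind
  obtain ⟨m, hm⟩ := exists_pos_measure_inter_indepSet hφ hφR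
  have hS := hR.inter (measurableSet_indepSet hφ m)
  refine ⟨R ∩ indepSet φ m, inter_subset_left, hS, hm, N, hN, φ, hφ, fun f hf =>
    exists_measurable_differential hφ hS inter_subset_right hf ?_⟩
  have hφf : ∀ i, IsLip ((Fin.snoc φ f : Fin (N + 1) → X → ℝ) i) :=
    Fin.forall_fin_succ'.mpr ⟨fun j => by simpa using hφ j, by simpa using hf⟩
  filter_upwards [hdep _ hφf] with x hx hxS
  exact exists_lipUp_sub_linComb_eq_zero hφ hf (not_dependentAt_of_mem_indepSet hxS.2) (hx hxS.1)

end CoordPatch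

lemma Set.PairwiseDisjoint.countable_of_measure_pos {α : Type*} [MeasurableSpace α]
    {μ : Measure α} [SFinite μ] {𝒟 : Set (Set α)} (hdisj : 𝒟.PairwiseDisjoint id)
    (hmeas : ∀ s ∈ 𝒟, MeasurableSet s) (hpos : ∀ s ∈ 𝒟, 0 < μ s) : 𝒟.Countable := by
  have := Measure.countable_meas_pos_of_disjoint_iUnion (μ := μ) (As := fun s : 𝒟 => (s : Set α))
    (fun s => hmeas s s.2) fun s t hst => hdisj s.2 t.2 (Subtype.coe_injective.ne hst)
  rw [eq_univ_of_forall (s := {s : 𝒟 | 0 < μ s}) fun s => hpos s s.2, countable_univ_iff] at this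
  exact countable_coe_iff.mp this

lemma exists_countable_family_ae_cover {α : Type*} [MeasurableSpace α] (μ : Measure α) [SFinite μ]
    {P : Set α → Prop} (hP : ∀ s, P s → MeasurableSet s ∧ 0 < μ s)
    (hsub : ∀ t, MeasurableSet t → 0 < μ t → ∃ s ⊆ t, P s) :
    ∃ (ι : Type) (_ : Countable ι) (s : ι → Set α), (∀ i, P (s i)) ∧ μ (⋃ i, s i)ᶜ = 0 := by
  obtain ⟨𝒟, h𝒟⟩ := zorn_subset {𝒟 : Set (Set α) | (∀ s ∈ 𝒟, P s) ∧ 𝒟.PairwiseDisjoint id}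
    fun c hc hchain => ⟨⋃₀ c, ⟨fun s ⟨t, htc, hst⟩ => (hc htc).1 s hst,
      (hchain.pairwiseDisjoint_sUnion id).mpr fun s hs => (hc hs).2⟩,
      fun _ hs => subset_sUnion_of_mem hs⟩
  obtain ⟨hP𝒟, hdisj⟩ := h𝒟.prop
  have hmeas : ∀ s ∈ 𝒟, MeasurableSet s := fun s hs => (hP s (hP𝒟 s hs)).1
  have hcount : 𝒟.Countable :=
    hdisj.countable_of_measure_pos hmeas fun s hs => (hP s (hP𝒟 s hs)).2
  have hcover : μ (⋃₀ 𝒟)ᶜ = 0 := by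
    by_contra hne
    obtain ⟨s, hs, hPs⟩ := hsub _ (MeasurableSet.sUnion hcount hmeas).compl
      (pos_iff_ne_zero.mpr hne)
    have hs𝒟 : Disjoint s (⋃₀ 𝒟) := disjoint_compl_left.mono_left hs
    have hins : insert s 𝒟 ⊆ 𝒟 := h𝒟.2 ⟨forall_mem_insert.mpr ⟨hPs, hP𝒟⟩,
      hdisj.insert fun t ht _ => hs𝒟.mono_right (subset_sUnion_of_mem ht)⟩ (subset_insert s 𝒟)
    have hs0 : s = ∅ := hs𝒟.eq_bot_of_le (subset_sUnion_of_mem (hins (mem_insert s 𝒟)))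
    exact (hP s hPs).2.ne' (hs0 ▸ measure_empty)
  obtain ⟨f, hf⟩ := countable_iff_exists_subset_range.mp hcount
  refine ⟨{n : ℕ // f n ∈ 𝒟}, inferInstance, fun n => f n, fun n => hP𝒟 _ n.2, ?_⟩
  convert hcover using 3
  ext x
  simp only [mem_iUnion, mem_sUnion, Subtype.exists]
  refine ⟨fun ⟨n, hn, hx⟩ => ⟨f n, hn, hx⟩, fun ⟨t, ht, hx⟩ => ?_⟩
  obtain ⟨n, rfl⟩ := hf ht
  exact ⟨n, ht, hx⟩

theorem finite_dimensionality_implies_measurable_differentiable_structure_general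
    (X : Type*) [MetricSpace X] [MeasurableSpace X] [BorelSpace X]
    (μ : Measure X) [SigmaFinite μ]
    (N₀ : ℕ)
    (hdim : ∀ f : Fin (N₀ + 1) → X → ℝ, (∀ i, IsLip (f i)) →
      ∀ᵐ x ∂μ, DependentAt f x) :
    HasMDS μ N₀ := by
  obtain ⟨ι, hι, U, hU, hcover⟩ := exists_countable_family_ae_cover μ
    (fun _ hS => ⟨hS.1, hS.2.1⟩) fun _ hR hpos => exists_isCoordPatch_subset hdim hR hpos
  choose hmeas hpos N hN φ hφ hdiff using hU
  exact ⟨ι, hι, U, N, φ, fun i => ⟨hmeas i, hpos i⟩, by rwa [← compl_eq_univ_sdiff], hN, hφ,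
    fun f hf i => let ⟨df, hdf, hae, huniq⟩ := hdiff i f hf
      ⟨df, hdf, hae, fun dg _ hdg => huniq dg hdg⟩⟩

/-- if the differentials have dimension at most `N₀` (every `(N₀+1)`-tuple of
Lipschitz functions is dependent to first order almost everywhere), then `X` admits a
measurable differentiable structure of dimension at most `N₀`. -/
theorem finite_dimensionality_implies_measurable_differentiable_structure
    (X : Type*) [MetricSpace X] [MeasurableSpace X] [BorelSpace X]
    (μ : Measure X) [SigmaFinite μ] (Cμ : ℝ≥0) (hdoub : DoublingWith μ Cμ)
    (N₀ : ℕ)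
    (hdim : ∀ f : Fin (N₀ + 1) → X → ℝ, (∀ i, IsLip (f i)) →
      ∀ᵐ x ∂μ, DependentAt f x) :
    HasMDS μ N₀ :=
  finite_dimensionality_implies_measurable_differentiable_structure_general X μ N₀ hdim
end

section
/- Let (X,d,μ) be a metric measure space with μ Borel regular and doubling, and suppose X is a K-Lip-lip space for some K > 0. Let Y₀ ⊆ X be a measurable subset of finite measure, let f : X → ℝ be Lipschitz, and let ε > 0 and δ > 0. Then there exists a measurable set Y ⊆ Y₀ with μ(Y₀ \ Y) < δ such that Y is ε-good for f, i.e. there exists r₀ > 0 such that for all r ∈ (0, r₀) and all x ∈ Y: (1/K)·Lip_x f − ε ≤ lip_x f − ε ≤ var_{x,r} f ≤ Lip_x f + ε. -/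
open Metric MeasureTheory Filter Set
open scoped NNReal ENNReal

/-- `X` is a `K`-Lip-lip space: `Lip_x f ≤ K · lip_x f` a.e., for every Lipschitz `f`. -/
def LipLipSpace {X : Type*} [MetricSpace X] [MeasurableSpace X] (μ : Measure X) (K : ℝ) :
    Prop :=
  ∀ f : X → ℝ, IsLip f → ∀ᵐ x ∂μ, lipUp f x ≤ K * lipLow f x

section VarAux

variable {X : Type*} [MetricSpace X] {f : X → ℝ} {Kf : ℝ≥0} {x : X} {r : ℝ}

lemma varBall_bddAbove (hf : LipschitzWith Kf f) (x : X) (hr : 0 < r) :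
    BddAbove ((fun y => |f y - f x| / r) '' Metric.ball x r) := by
  refine ⟨Kf, ?_⟩
  rintro _ ⟨y, hy, rfl⟩
  rw [div_le_iff₀ hr]
  have h1 : |f y - f x| ≤ Kf * dist y x := by
    rw [← Real.dist_eq]; exact hf.dist_le_mul y x
  have h2 : dist y x < r := mem_ball.1 hy
  nlinarith [Kf.coe_nonneg, dist_nonneg (x := y) (y := x)]

lemma le_varBall (hf : LipschitzWith Kf f) (hr : 0 < r) {y : X} (hy : y ∈ Metric.ball x r) :
    |f y - f x| / r ≤ varBall f x r :=
  le_csSup (varBall_bddAbove hf x hr) ⟨y, hy, rfl⟩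

lemma varBall_nonneg_s9 (hf : LipschitzWith Kf f) (hr : 0 < r) : 0 ≤ varBall f x r := by
  have := le_varBall (x := x) (y := x) hf hr (Metric.mem_ball_self hr)
  simpa using this

lemma varBall_le (hf : LipschitzWith Kf f) (hr : 0 < r) {C : ℝ}
    (h : ∀ y ∈ Metric.ball x r, |f y - f x| / r ≤ C) : varBall f x r ≤ C :=
  csSup_le (Set.Nonempty.image _ ⟨x, Metric.mem_ball_self hr⟩)
    (by rintro _ ⟨y, hy, rfl⟩; exact h y hy)

lemma varBall_le_lip (hf : LipschitzWith Kf f) (hr : 0 < r) : varBall f x r ≤ Kf := by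
  refine varBall_le hf hr fun y hy => ?_
  rw [div_le_iff₀ hr]
  have h1 : |f y - f x| ≤ Kf * dist y x := by
    rw [← Real.dist_eq]; exact hf.dist_le_mul y x
  have h2 : dist y x < r := mem_ball.1 hy
  nlinarith [Kf.coe_nonneg, dist_nonneg (x := y) (y := x)]

/-- Upper bounds for `varBall` at all smaller rational radii transfer to a real radius. -/
lemma varBall_le_of_rat (hf : LipschitzWith Kf f) (hr : 0 < r) {C : ℝ}
    (h : ∀ q : ℚ, 0 < (q : ℝ) → (q : ℝ) < r → varBall f x (q : ℝ) ≤ C) :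
    varBall f x r ≤ C := by
  obtain ⟨q₀, hq₀, hq₀'⟩ := exists_rat_btwn hr
  have hq₀pos : 0 < (q₀ : ℝ) := hq₀
  have hC : 0 ≤ C := le_trans (varBall_nonneg_s9 hf hq₀pos) (h q₀ hq₀pos hq₀')
  refine varBall_le hf hr fun y hy => ?_
  have hd : dist y x < r := mem_ball.1 hy
  obtain ⟨q, hq1, hq2⟩ := exists_rat_btwn hd
  have hq0 : 0 < (q : ℝ) := lt_of_le_of_lt dist_nonneg hq1
  have h1 : |f y - f x| / r ≤ |f y - f x| / q := by
    apply div_le_div_of_nonneg_left (abs_nonneg _) hq0 hq2.le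
  exact h1.trans ((le_varBall hf hq0 (mem_ball.2 hq1)).trans (h q hq0 hq2))

/-- Lower bounds for `varBall` at all smaller rational radii transfer to a real radius. -/
lemma le_varBall_of_rat (hf : LipschitzWith Kf f) (hr : 0 < r) {c : ℝ}
    (h : ∀ q : ℚ, 0 < (q : ℝ) → (q : ℝ) < r → c ≤ varBall f x (q : ℝ)) :
    c ≤ varBall f x r := by
  rcases le_or_gt c 0 with hc | hc
  · exact hc.trans (varBall_nonneg_s9 hf hr)
  by_contra hlt
  push_neg at hlt
  set V := varBall f x r with hV
  have hV0 : 0 ≤ V := varBall_nonneg_s9 hf hr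
  have hb : max (r * V / c) (r / 2) < r := by
    apply max_lt
    · rw [div_lt_iff₀ hc]; nlinarith
    · linarith
  obtain ⟨q, hq1, hq2⟩ := exists_rat_btwn hb
  have hq0 : 0 < (q : ℝ) := lt_of_lt_of_le (by positivity) ((le_max_right _ _).trans hq1.le)
  have h2 : varBall f x (q : ℝ) ≤ r * V / q := by
    refine varBall_le hf hq0 fun y hy => ?_
    have hyr : y ∈ Metric.ball x r := mem_ball.2 (lt_trans (mem_ball.1 hy) hq2)
    have h3 : |f y - f x| / r ≤ V := le_varBall hf hr hyr
    have h3' : |f y - f x| ≤ r * V := by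
      rw [div_le_iff₀ hr] at h3; linarith
    gcongr
  have h4 : c ≤ r * V / q := (h q hq0 hq2).trans h2
  have h5 : c * q ≤ r * V := (le_div_iff₀ hq0).1 h4
  have h6 : r * V / c < q := lt_of_le_of_lt (le_max_left _ _) hq1
  have h7 : r * V < q * c := (div_lt_iff₀ hc).1 h6
  nlinarith

lemma lowerSemicontinuous_varBall (hf : LipschitzWith Kf f) (hr : 0 < r) :
    LowerSemicontinuous (fun x : X => varBall f x r) := by
  intro x c hc
  obtain ⟨_, ⟨y, hy, rfl⟩, hcy⟩ :=
    exists_lt_of_lt_csSup (Set.Nonempty.image _ ⟨x, Metric.mem_ball_self hr⟩) hc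
  have h1 : ∀ᶠ x' in nhds x, dist y x' < r := by
    have hcont : Continuous fun x' : X => dist y x' := continuous_const.dist continuous_id
    exact hcont.continuousAt (Iio_mem_nhds (mem_ball.1 hy))
  have h2 : ∀ᶠ x' in nhds x, c < |f y - f x'| / r := by
    have hcont : Continuous fun x' : X => |f y - f x'| / r :=
      ((continuous_const.sub hf.continuous).abs).div_const r
    exact hcont.continuousAt (Ioi_mem_nhds hcy)
  filter_upwards [h1, h2] with x' hd hcv
  exact lt_of_lt_of_le hcv (le_varBall hf hr (mem_ball.2 hd))

lemma measurable_varBall [MeasurableSpace X] [BorelSpace X]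
    (hf : LipschitzWith Kf f) (hr : 0 < r) :
    Measurable fun x : X => varBall f x r :=
  (lowerSemicontinuous_varBall hf hr).measurable

/-- Index type: rationals in `(0, 1/(m+1))`. -/
def RatIdx (m : ℕ) : Type := {q : ℚ // 0 < (q : ℝ) ∧ (q : ℝ) < 1 / (m + 1)}

instance (m : ℕ) : Countable (RatIdx m) := by unfold RatIdx; infer_instance

instance (m : ℕ) : Nonempty (RatIdx m) := by
  obtain ⟨q, h1, h2⟩ := exists_rat_btwn (show (0 : ℝ) < 1 / (m + 1) by positivity)
  exact ⟨⟨q, h1, h2⟩⟩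

noncomputable def Lseq (f : X → ℝ) (m : ℕ) (x : X) : ℝ :=
  ⨅ q : RatIdx m, varBall f x (q.1 : ℝ)

noncomputable def Useq (f : X → ℝ) (m : ℕ) (x : X) : ℝ :=
  ⨆ q : RatIdx m, varBall f x (q.1 : ℝ)

lemma Lseq_bddBelow (hf : LipschitzWith Kf f) (m : ℕ) (x : X) :
    BddBelow (Set.range fun q : RatIdx m => varBall f x (q.1 : ℝ)) := by
  refine ⟨0, ?_⟩; rintro _ ⟨q, rfl⟩; exact varBall_nonneg_s9 hf q.2.1

lemma Useq_bddAbove (hf : LipschitzWith Kf f) (m : ℕ) (x : X) :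
    BddAbove (Set.range fun q : RatIdx m => varBall f x (q.1 : ℝ)) := by
  refine ⟨Kf, ?_⟩; rintro _ ⟨q, rfl⟩; exact varBall_le_lip hf q.2.1

lemma Lseq_le (hf : LipschitzWith Kf f) (m : ℕ) (x : X) (q : RatIdx m) :
    Lseq f m x ≤ varBall f x (q.1 : ℝ) :=
  ciInf_le (Lseq_bddBelow hf m x) q

lemma le_Useq (hf : LipschitzWith Kf f) (m : ℕ) (x : X) (q : RatIdx m) :
    varBall f x (q.1 : ℝ) ≤ Useq f m x :=
  le_ciSup (Useq_bddAbove hf m x) q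

lemma one_div_mono_nat {m m' : ℕ} (h : m ≤ m') :
    (1 : ℝ) / (m' + 1) ≤ 1 / (m + 1) := by
  apply one_div_le_one_div_of_le
  · positivity
  · have : (m : ℝ) ≤ m' := Nat.cast_le.2 h
    linarith

lemma Lseq_monotone (hf : LipschitzWith Kf f) (x : X) :
    Monotone fun m => Lseq f m x := by
  intro m m' h
  refine le_ciInf fun q => ?_
  exact Lseq_le hf m x ⟨q.1, q.2.1, lt_of_lt_of_le q.2.2 (one_div_mono_nat h)⟩

lemma Useq_antitone (hf : LipschitzWith Kf f) (x : X) :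
    Antitone fun m => Useq f m x := by
  intro m m' h
  refine ciSup_le fun q => ?_
  exact le_Useq hf m x ⟨q.1, q.2.1, lt_of_lt_of_le q.2.2 (one_div_mono_nat h)⟩

lemma isBoundedUnder_le_var (hf : LipschitzWith Kf f) (x : X) :
    IsBoundedUnder (· ≤ ·) (nhdsWithin 0 (Set.Ioi (0:ℝ))) (fun r => varBall f x r) := by
  refine ⟨Kf, eventually_map.2 ?_⟩
  filter_upwards [self_mem_nhdsWithin] with r hr
  exact varBall_le_lip hf hr

lemma isBoundedUnder_ge_var (hf : LipschitzWith Kf f) (x : X) :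
    IsBoundedUnder (· ≥ ·) (nhdsWithin 0 (Set.Ioi (0:ℝ))) (fun r => varBall f x r) := by
  refine ⟨0, eventually_map.2 ?_⟩
  filter_upwards [self_mem_nhdsWithin] with r hr
  exact varBall_nonneg_s9 hf hr

lemma eventually_Ioo_nhdsWithin {u : ℝ} (hu : 0 < u) :
    ∀ᶠ r in nhdsWithin 0 (Set.Ioi (0:ℝ)), r ∈ Set.Ioo 0 u :=
  Ioo_mem_nhdsGT_of_mem (by constructor <;> simp [hu])

lemma Lseq_le_varBall (hf : LipschitzWith Kf f) (m : ℕ) (x : X) {r : ℝ}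
    (hr : r ∈ Set.Ioo 0 (1 / (m + 1) : ℝ)) : Lseq f m x ≤ varBall f x r := by
  refine le_varBall_of_rat hf hr.1 fun q hq0 hqr => ?_
  exact Lseq_le hf m x ⟨q, hq0, lt_trans hqr hr.2⟩

lemma varBall_le_Useq (hf : LipschitzWith Kf f) (m : ℕ) (x : X) {r : ℝ}
    (hr : r ∈ Set.Ioo 0 (1 / (m + 1) : ℝ)) : varBall f x r ≤ Useq f m x := by
  refine varBall_le_of_rat hf hr.1 fun q hq0 hqr => ?_
  exact le_Useq hf m x ⟨q, hq0, lt_trans hqr hr.2⟩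

lemma exists_small_idx {u : ℝ} (hu : 0 < u) : ∃ m : ℕ, (1 : ℝ) / (m + 1) < u := by
  obtain ⟨m, hm⟩ := exists_nat_one_div_lt hu
  exact ⟨m, by exact_mod_cast hm⟩

lemma tendsto_Lseq (hf : LipschitzWith Kf f) (x : X) :
    Tendsto (fun m => Lseq f m x) atTop (nhds (lipLow f x)) := by
  have hbdd : BddAbove (Set.range fun m => Lseq f m x) := by
    refine ⟨Kf, ?_⟩
    rintro _ ⟨m, rfl⟩
    exact (Lseq_le hf m x (Classical.arbitrary _)).trans
      (varBall_le_lip hf (Classical.arbitrary (RatIdx m)).2.1)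
  have hT := tendsto_atTop_ciSup (Lseq_monotone hf x) hbdd
  have hEq : (⨆ m, Lseq f m x) = lipLow f x := by
    apply le_antisymm
    · refine ciSup_le fun m => ?_
      refine le_liminf_of_le ((isBoundedUnder_le_var hf x).isCoboundedUnder_ge) ?_
      filter_upwards [eventually_Ioo_nhdsWithin
        (show (0:ℝ) < 1 / (m + 1) by positivity)] with r hr
      exact Lseq_le_varBall hf m x hr
    · by_contra hcon
      push_neg at hcon
      set S := ⨆ m, Lseq f m x with hS
      set c := (S + lipLow f x) / 2 with hc
      have hc1 : S < c := by simp only [hc]; linarith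
      have hc2 : c < lipLow f x := by simp only [hc]; linarith
      have hev : ∀ᶠ r in nhdsWithin 0 (Set.Ioi (0:ℝ)), c < varBall f x r :=
        eventually_lt_of_lt_liminf hc2 (isBoundedUnder_ge_var hf x)
      obtain ⟨u, hu, hsub⟩ := mem_nhdsGT_iff_exists_Ioo_subset.1 hev
      obtain ⟨m, hm⟩ := exists_small_idx (show (0:ℝ) < u from hu)
      have hLm : c ≤ Lseq f m x := by
        refine le_ciInf fun q => ?_
        exact (hsub ⟨q.2.1, lt_trans q.2.2 hm⟩).le
      have : Lseq f m x ≤ S := le_ciSup hbdd m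
      linarith
  rw [← hEq]; exact hT

lemma tendsto_Useq (hf : LipschitzWith Kf f) (x : X) :
    Tendsto (fun m => Useq f m x) atTop (nhds (lipUp f x)) := by
  have hbdd : BddBelow (Set.range fun m => Useq f m x) := by
    refine ⟨0, ?_⟩
    rintro _ ⟨m, rfl⟩
    exact le_trans (varBall_nonneg_s9 hf (Classical.arbitrary (RatIdx m)).2.1)
      (le_Useq hf m x (Classical.arbitrary _))
  have hT := tendsto_atTop_ciInf (Useq_antitone hf x) hbdd
  have hEq : (⨅ m, Useq f m x) = lipUp f x := by
    apply le_antisymm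
    · by_contra hcon
      push_neg at hcon
      set S := ⨅ m, Useq f m x with hS
      set c := (S + lipUp f x) / 2 with hc
      have hc1 : lipUp f x < c := by simp only [hc]; linarith
      have hc2 : c < S := by simp only [hc]; linarith
      have hev : ∀ᶠ r in nhdsWithin 0 (Set.Ioi (0:ℝ)), varBall f x r < c :=
        eventually_lt_of_limsup_lt hc1 (isBoundedUnder_le_var hf x)
      obtain ⟨u, hu, hsub⟩ := mem_nhdsGT_iff_exists_Ioo_subset.1 hev
      obtain ⟨m, hm⟩ := exists_small_idx (show (0:ℝ) < u from hu)
      have hUm : Useq f m x ≤ c := by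
        refine ciSup_le fun q => ?_
        exact (hsub ⟨q.2.1, lt_trans q.2.2 hm⟩).le
      have : S ≤ Useq f m x := ciInf_le hbdd m
      linarith
    · refine le_ciInf fun m => ?_
      refine limsup_le_of_le ((isBoundedUnder_ge_var hf x).isCoboundedUnder_le) ?_
      filter_upwards [eventually_Ioo_nhdsWithin
        (show (0:ℝ) < 1 / (m + 1) by positivity)] with r hr
      exact varBall_le_Useq hf m x hr
  rw [← hEq]; exact hT

end VarAux

/-- Lemma 5.3: in a doubling `K`-Lip-lip space, any finite measure set
contains, up to a set of measure `< δ`, a subset which is `ε`-good for a given Lipschitz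
function `f`. -/
theorem exists_eps_good_subset
    (X : Type*) [MetricSpace X] [MeasurableSpace X] [BorelSpace X]
    (μ : Measure X) (Cμ : ℝ≥0) (hdoub : DoublingWith μ Cμ)
    (K : ℝ) (hK : 0 < K) (hLipLip : LipLipSpace μ K)
    (Y₀ : Set X) (hY₀ : MeasurableSet Y₀) (hY₀fin : μ Y₀ < ⊤)
    (f : X → ℝ) (hf : IsLip f) (ε δ : ℝ) (hε : 0 < ε) (hδ : 0 < δ) :
    ∃ Y : Set X, Y ⊆ Y₀ ∧ MeasurableSet Y ∧ μ (Y₀ \ Y) < ENNReal.ofReal δ ∧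
      ∃ r₀ : ℝ, 0 < r₀ ∧ ∀ r : ℝ, 0 < r → r < r₀ → ∀ x ∈ Y,
        (1 / K) * lipUp f x - ε ≤ lipLow f x - ε ∧
        lipLow f x - ε ≤ varBall f x r ∧
        varBall f x r ≤ lipUp f x + ε := by
  obtain ⟨Kf, hf'⟩ := hf
  have hLmeas : ∀ m, Measurable (Lseq f m) := fun m =>
    Measurable.iInf fun q => measurable_varBall hf' q.2.1
  have hUmeas : ∀ m, Measurable (Useq f m) := fun m =>
    Measurable.iSup fun q => measurable_varBall hf' q.2.1
  have hlowmeas : Measurable (lipLow f) := by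
    apply measurable_of_tendsto_metrizable hLmeas
    rw [tendsto_pi_nhds]
    exact fun x => tendsto_Lseq hf' x
  have hupmeas : Measurable (lipUp f) := by
    apply measurable_of_tendsto_metrizable hUmeas
    rw [tendsto_pi_nhds]
    exact fun x => tendsto_Useq hf' x
  have hδ3 : 0 < δ / 3 := by linarith
  obtain ⟨t₁, ht₁sub, ht₁meas, ht₁μ, ht₁unif⟩ :=
    tendstoUniformlyOn_of_ae_tendsto (fun m => (hLmeas m).stronglyMeasurable)
      hlowmeas.stronglyMeasurable hY₀ hY₀fin.ne
      (Filter.Eventually.of_forall fun x _ => tendsto_Lseq hf' x) hδ3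
  obtain ⟨t₂, ht₂sub, ht₂meas, ht₂μ, ht₂unif⟩ :=
    tendstoUniformlyOn_of_ae_tendsto (fun m => (hUmeas m).stronglyMeasurable)
      hupmeas.stronglyMeasurable hY₀ hY₀fin.ne
      (Filter.Eventually.of_forall fun x _ => tendsto_Useq hf' x) hδ3
  have hae := hLipLip f ⟨Kf, hf'⟩
  set N := toMeasurable μ {x | ¬ lipUp f x ≤ K * lipLow f x} with hN
  have hNnull : μ N = 0 := by
    rw [hN, measure_toMeasurable]
    exact hae
  refine ⟨((Y₀ \ t₁) \ t₂) \ N, fun x hx => hx.1.1.1, (((hY₀.diff ht₁meas).diff ht₂meas).diff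
    (measurableSet_toMeasurable μ _)), ?_, ?_⟩
  · have hsub : Y₀ \ (((Y₀ \ t₁) \ t₂) \ N) ⊆ t₁ ∪ t₂ ∪ N := by
      intro x hx
      simp only [mem_diff, mem_union, not_and, not_not] at hx ⊢
      by_cases h1 : x ∈ t₁
      · exact Or.inl (Or.inl h1)
      by_cases h2 : x ∈ t₂
      · exact Or.inl (Or.inr h2)
      exact Or.inr (hx.2 ⟨⟨hx.1, h1⟩, h2⟩)
    calc μ (Y₀ \ (((Y₀ \ t₁) \ t₂) \ N)) ≤ μ (t₁ ∪ t₂ ∪ N) := measure_mono hsub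
      _ ≤ μ (t₁ ∪ t₂) + μ N := measure_union_le _ _
      _ = μ (t₁ ∪ t₂) := by rw [hNnull, add_zero]
      _ ≤ μ t₁ + μ t₂ := measure_union_le _ _
      _ ≤ ENNReal.ofReal (δ / 3) + ENNReal.ofReal (δ / 3) := add_le_add ht₁μ ht₂μ
      _ = ENNReal.ofReal (δ / 3 + δ / 3) := (ENNReal.ofReal_add hδ3.le hδ3.le).symm
      _ < ENNReal.ofReal δ := by
          apply ENNReal.ofReal_lt_ofReal_iff_of_nonneg (by linarith) |>.2
          linarith
  · obtain ⟨M₁, hM₁⟩ := Filter.eventually_atTop.1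
      ((Metric.tendstoUniformlyOn_iff.1 ht₁unif) ε hε)
    obtain ⟨M₂, hM₂⟩ := Filter.eventually_atTop.1
      ((Metric.tendstoUniformlyOn_iff.1 ht₂unif) ε hε)
    set M := max M₁ M₂ with hM
    refine ⟨1 / (M + 1), by positivity, fun r hr hrM x hx => ?_⟩
    have hxY₀ : x ∈ Y₀ := hx.1.1.1
    have hx1 : x ∈ Y₀ \ t₁ := hx.1.1
    have hx2 : x ∈ Y₀ \ t₂ := ⟨hxY₀, hx.1.2⟩
    have hxN : x ∉ N := hx.2
    have hliplip : lipUp f x ≤ K * lipLow f x := by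
      by_contra hcon
      exact hxN (subset_toMeasurable μ _ hcon)
    have hrIoo : r ∈ Set.Ioo 0 (1 / (M + 1) : ℝ) := ⟨hr, hrM⟩
    have hL : dist (lipLow f x) (Lseq f M x) < ε := hM₁ M (le_max_left _ _) x hx1
    have hU : dist (lipUp f x) (Useq f M x) < ε := hM₂ M (le_max_right _ _) x hx2
    rw [Real.dist_eq, abs_sub_lt_iff] at hL hU
    refine ⟨?_, ?_, ?_⟩
    · have h1 : (1 / K) * lipUp f x ≤ lipLow f x := by
        rw [div_mul_eq_mul_div, one_mul, div_le_iff₀ hK]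
        linarith [hliplip, mul_comm K (lipLow f x)]
      linarith
    · have h2 : Lseq f M x ≤ varBall f x r := Lseq_le_varBall hf' M x hrIoo
      linarith [hL.1]
    · have h3 : varBall f x r ≤ Useq f M x := varBall_le_Useq hf' M x hrIoo
      linarith [hU.2]
end

section
/- Let Z be a metric space, K ≥ 1, and let V be a linear subspace of the real vector space of functions Z → ℝ such that every element of V is a K-quasilinear Lipschitz function. Suppose some ball B(x,r) in Z contains a finite subset T such that every point of B(x,r) lies within distance r/(4K) of T (a finite r/(4K)-net of the ball). Then dim V ≤ |T|. -/
open Metric MeasureTheory Filter Set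
open scoped NNReal ENNReal

/-- The global Lipschitz constant `LIP(u)`. -/
noncomputable def LIPconst {Z : Type*} [MetricSpace Z] (u : Z → ℝ) : ℝ :=
  sSup {v : ℝ | ∃ p q : Z, p ≠ q ∧ v = |u p - u q| / dist p q}

/-- A Lipschitz function `u` is `K`-quasilinear if its variation on every ball is at least
`LIP(u)/K`. -/
def Quasilinear {Z : Type*} [MetricSpace Z] (K : ℝ) (u : Z → ℝ) : Prop :=
  IsLip u ∧ ∀ (x : Z) (r : ℝ), 0 < r → LIPconst u / K ≤ varBall u x r

/-- Lemma 5.4(1): if a ball of radius `r` contains a finite `r/(4K)`-net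
`T`, then any linear space of `K`-quasilinear functions has dimension at most `|T|`. -/
theorem quasilinear_dim_le_net_card
    (Z : Type*) [MetricSpace Z] (K : ℝ) (hK : 1 ≤ K)
    (V : Submodule ℝ (Z → ℝ)) (hV : ∀ u ∈ V, Quasilinear K u)
    (x : Z) (r : ℝ) (hr : 0 < r) (T : Finset Z)
    (hT : ∀ y ∈ Metric.ball x r, ∃ t ∈ T, dist y t ≤ r / (4 * K)) :
    Module.rank ℝ V ≤ T.card := by
  classical
  have hx : x ∈ Metric.ball x r := Metric.mem_ball_self hr
  obtain ⟨t₀, ht₀T, ht₀d⟩ := hT x hx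
  have hK0 : (0:ℝ) < K := lt_of_lt_of_le one_pos hK
  have key : ∀ u ∈ V, (∀ t ∈ T, u t = 0) → u = 0 := by
    intro u hu huT
    obtain ⟨⟨K', hK'⟩, hql⟩ := hV u hu
    set L := LIPconst u with hLdef
    have hbdd : BddAbove {v : ℝ | ∃ p q : Z, p ≠ q ∧ v = |u p - u q| / dist p q} := by
      refine ⟨K', ?_⟩
      rintro v ⟨p, q, hpq, rfl⟩
      rw [div_le_iff₀ (dist_pos.2 hpq)]
      calc |u p - u q| = dist (u p) (u q) := (Real.dist_eq _ _).symm
        _ ≤ K' * dist p q := hK'.dist_le_mul p q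
    have hLip : ∀ p q : Z, |u p - u q| ≤ L * dist p q := by
      intro p q
      by_cases h : p = q
      · simp [h]
      · have h1 : |u p - u q| / dist p q ≤ L := le_csSup hbdd ⟨p, q, h, rfl⟩
        have hd : 0 < dist p q := dist_pos.2 h
        calc |u p - u q| = |u p - u q| / dist p q * dist p q := by field_simp
          _ ≤ L * dist p q := mul_le_mul_of_nonneg_right h1 dist_nonneg
    have hL0 : 0 ≤ L := by
      by_cases hne : {v : ℝ | ∃ p q : Z, p ≠ q ∧ v = |u p - u q| / dist p q}.Nonempty
      · obtain ⟨v, p, q, hpq, rfl⟩ := hne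
        exact le_trans (div_nonneg (abs_nonneg _) dist_nonneg)
          (le_csSup hbdd ⟨p, q, hpq, rfl⟩)
      · rw [hLdef, LIPconst, Set.not_nonempty_iff_eq_empty.1 hne, Real.sSup_empty]
    have hsmall : ∀ y ∈ Metric.ball x r, |u y| ≤ L * (r / (4 * K)) := by
      intro y hy
      obtain ⟨t, htT, hyt⟩ := hT y hy
      have h1 := hLip y t
      rw [huT t htT, sub_zero] at h1
      exact h1.trans (mul_le_mul_of_nonneg_left hyt hL0)
    have hvar : varBall u x r ≤ L / (2 * K) := by
      apply Real.sSup_le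
      · rintro v ⟨y, hy, rfl⟩
        have h1 := hsmall y hy
        have h2 := hsmall x hx
        have h3 : |u y - u x| ≤ 2 * (L * (r / (4 * K))) := by
          calc |u y - u x| ≤ |u y| + |u x| := abs_sub _ _
            _ ≤ 2 * (L * (r / (4 * K))) := by linarith
        rw [div_le_iff₀ hr]
        calc |u y - u x| ≤ 2 * (L * (r / (4 * K))) := h3
          _ = L / (2 * K) * r := by field_simp; ring
      · positivity
    have hql' := hql x r hr
    have hLle : L / K ≤ L / (2 * K) := le_trans hql' hvar
    have hL : L = 0 := by
      have h2 : 2 * L ≤ L := by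
        rw [div_le_div_iff₀ hK0 (by positivity)] at hLle
        nlinarith
      linarith
    funext p
    have h1 := hLip p t₀
    rw [huT t₀ ht₀T, sub_zero, hL, zero_mul] at h1
    have : u p = 0 := abs_nonpos_iff.1 h1
    simpa using this
  let e : V →ₗ[ℝ] (↥(T : Set Z) → ℝ) :=
    { toFun := fun u t => u.1 t.1
      map_add' := fun u v => rfl
      map_smul' := fun c u => rfl }
  have hinj : Function.Injective e := by
    rw [injective_iff_map_eq_zero]
    intro u hu0
    have hz : (u : Z → ℝ) = 0 := by
      refine key u u.2 fun t ht => ?_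
      exact congrFun hu0 ⟨t, ht⟩
    exact Subtype.ext hz
  calc Module.rank ℝ V ≤ Module.rank ℝ (↥(T : Set Z) → ℝ) :=
        LinearMap.rank_le_of_injective e hinj
    _ = T.card := by
        rw [rank_fun']
        simp
end

section
/- There is a universal constant A < ∞ with the following property: for every C ≥ 1, every C-doubling metric space Z, every K ≥ 1, and every linear subspace V of the real vector space of functions Z → ℝ all of whose elements are K-quasilinear Lipschitz functions, one has dim V ≤ (A·K)^{log₂ C}. -/
open Metric MeasureTheory Filter Set
open scoped NNReal ENNReal

/-- A metric space is `C`-doubling: every ball is covered by at most `C` balls of half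
the radius. -/
def DoublingSpace (Z : Type*) [MetricSpace Z] (C : ℝ) : Prop :=
  ∀ (x : Z) (r : ℝ), 0 < r → ∃ T : Finset Z,
    (T.card : ℝ) ≤ C ∧ Metric.ball x r ⊆ ⋃ t ∈ T, Metric.ball t (r / 2)

/-!
Choose `m` with `2K < 2^m ≤ 4K` and cover a unit ball by `C^m` balls of radius `2^{-m}`. A
`K`-quasilinear function vanishing at their centres vanishes identically, so restriction to the
centres is injective on `V`, and `C^m = (2^m)^{log₂ C} ≤ (4K)^{log₂ C}`.
-/

section LIPconst

variable {Z : Type*} [MetricSpace Z] {u : Z → ℝ}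

lemma IsLip.bddAbove_slopes (hu : IsLip u) :
    BddAbove {v : ℝ | ∃ p q : Z, p ≠ q ∧ v = |u p - u q| / dist p q} := by
  obtain ⟨L, hL⟩ := hu
  refine ⟨L, ?_⟩
  rintro v ⟨p, q, hpq, rfl⟩
  rw [div_le_iff₀ (dist_pos.2 hpq), ← Real.dist_eq]
  exact hL.dist_le_mul p q

lemma LIPconst_nonneg (u : Z → ℝ) : 0 ≤ LIPconst u :=
  Real.sSup_nonneg <| by
    rintro v ⟨p, q, -, rfl⟩
    positivity

lemma IsLip.abs_sub_le_LIPconst_mul_dist (hu : IsLip u) (p q : Z) :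
    |u p - u q| ≤ LIPconst u * dist p q := by
  rcases eq_or_ne p q with rfl | hpq
  · simp
  rw [← div_le_iff₀ (dist_pos.2 hpq)]
  exact le_csSup hu.bddAbove_slopes ⟨p, q, hpq, rfl⟩

end LIPconst

lemma varBall_le_of_forall_abs_sub_le {X : Type*} [MetricSpace X] {f : X → ℝ} {x : X}
    {r M : ℝ} (hr : 0 < r) (hM : ∀ y ∈ ball x r, |f y - f x| ≤ M) :
    varBall f x r ≤ M / r :=
  csSup_le ((nonempty_ball.2 hr).image _) <| by
    rintro _ ⟨y, hy, rfl⟩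
    exact div_le_div_of_nonneg_right (hM y hy) hr.le

lemma DoublingSpace.exists_finset_card_le_pow_cover {Z : Type*} [MetricSpace Z] {C : ℝ}
    (hZ : DoublingSpace Z C) (hC : 0 ≤ C) (x : Z) {r : ℝ} (hr : 0 < r) (m : ℕ) :
    ∃ T : Finset Z, (T.card : ℝ) ≤ C ^ m ∧ ball x r ⊆ ⋃ t ∈ T, ball t (r / 2 ^ m) := by
  classical
  induction m with
  | zero => exact ⟨{x}, by simp, by simp⟩
  | succ m ih =>
    obtain ⟨T, hTcard, hTcover⟩ := ih
    choose S hScard hScover using fun t : Z => hZ t (r / 2 ^ m) (by positivity)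
    refine ⟨T.biUnion S, ?_, fun y hy => ?_⟩
    · calc ((T.biUnion S).card : ℝ) ≤ ∑ t ∈ T, ((S t).card : ℝ) := by
            exact_mod_cast Finset.card_biUnion_le
        _ ≤ T.card * C := by simpa using Finset.sum_le_sum fun t _ => hScard t
        _ ≤ C ^ (m + 1) := by rw [pow_succ]; gcongr
    · obtain ⟨t, ht, hyt⟩ := mem_iUnion₂.1 (hTcover hy)
      obtain ⟨s, hs, hys⟩ := mem_iUnion₂.1 (hScover t hyt)
      refine mem_iUnion₂.2 ⟨s, Finset.mem_biUnion.2 ⟨t, ht, hs⟩, ?_⟩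
      rwa [pow_succ, ← div_div]

/-- On the ball, `u` stays within `2 LIP(u) δ` of `u x`, so its variation there is below
`LIP(u)/K` unless `LIP(u) = 0`. -/
lemma Quasilinear.eq_zero_of_eq_zero_on_net {Z : Type*} [MetricSpace Z] {K r δ : ℝ} {u : Z → ℝ}
    (hu : Quasilinear K u) (hK : 0 < K) (hr : 0 < r) (hδ : 2 * K * δ < r) {x : Z} {T : Set Z}
    (hcover : ball x r ⊆ ⋃ t ∈ T, ball t δ) (hT : ∀ t ∈ T, u t = 0) : u = 0 := by
  set L := LIPconst u
  have hL : 0 ≤ L := LIPconst_nonneg u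
  have hnear : ∀ y ∈ ball x r, ∃ t ∈ T, u t = 0 ∧ |u y| ≤ L * δ := by
    intro y hy
    obtain ⟨t, ht, hyt⟩ := mem_iUnion₂.1 (hcover hy)
    refine ⟨t, ht, hT t ht, ?_⟩
    calc |u y| = |u y - u t| := by rw [hT t ht, sub_zero]
      _ ≤ L * dist y t := hu.1.abs_sub_le_LIPconst_mul_dist y t
      _ ≤ L * δ := by gcongr; exact (mem_ball.1 hyt).le
  have hvar : L / K ≤ 2 * L * δ / r := by
    refine (hu.2 x r hr).trans (varBall_le_of_forall_abs_sub_le hr fun y hy => ?_)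
    obtain ⟨-, -, -, hy⟩ := hnear y hy
    obtain ⟨-, -, -, hx⟩ := hnear x (mem_ball_self hr)
    linarith [abs_sub (u y) (u x)]
  have hL0 : L = 0 := by
    rw [div_le_div_iff₀ hK hr] at hvar
    nlinarith
  obtain ⟨t, -, ht, -⟩ := hnear x (mem_ball_self hr)
  ext z
  have hz : |u z - u t| ≤ L * dist z t := hu.1.abs_sub_le_LIPconst_mul_dist z t
  simpa [hL0, ht] using hz

lemma Submodule.finiteDimensional_and_finrank_le_card_of_eq_zero_on {𝕜 X : Type*} [Field 𝕜]
    {V : Submodule 𝕜 (X → 𝕜)} (T : Finset X) (hT : ∀ u ∈ V, (∀ t ∈ T, u t = 0) → u = 0) :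
    FiniteDimensional 𝕜 V ∧ Module.finrank 𝕜 V ≤ T.card := by
  let restrict : V →ₗ[𝕜] (T → 𝕜) := LinearMap.pi fun t => (LinearMap.proj (t : X)).comp V.subtype
  have hinj : Function.Injective restrict := by
    rw [← LinearMap.ker_eq_bot, LinearMap.ker_eq_bot']
    rintro ⟨u, hu⟩ hzero
    exact Subtype.ext (hT u hu fun t ht => congrFun hzero ⟨t, ht⟩)
  refine ⟨Module.Finite.of_injective restrict hinj, ?_⟩
  simpa using LinearMap.finrank_le_finrank_of_injective hinj

/-- Lemma 5.4(2): there is a universal constant `A` such that any linear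
space of `K`-quasilinear functions on a `C`-doubling metric space has dimension at most
`(A·K)^{log₂ C}`. -/
theorem quasilinear_dim_le_of_doubling :
    ∃ A : ℝ, 0 < A ∧ ∀ (C : ℝ), 1 ≤ C → ∀ (Z : Type) [MetricSpace Z],
      DoublingSpace Z C → ∀ (K : ℝ), 1 ≤ K →
      ∀ V : Submodule ℝ (Z → ℝ), (∀ u ∈ V, Quasilinear K u) →
        FiniteDimensional ℝ V ∧
        (Module.finrank ℝ V : ℝ) ≤ (A * K) ^ Real.logb 2 C := by
  refine ⟨4, by norm_num, fun C hC Z _ hZ K hK V hV => ?_⟩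
  obtain ⟨n, hn_le, hn_lt⟩ := exists_nat_pow_near (by linarith : 1 ≤ 2 * K) one_lt_two
  obtain ⟨T, hTcard, hT⟩ : ∃ T : Finset Z, (T.card : ℝ) ≤ C ^ (n + 1) ∧
      ∀ u ∈ V, (∀ t ∈ T, u t = 0) → u = 0 := by
    rcases isEmpty_or_nonempty Z with _ | ⟨⟨x⟩⟩
    · refine ⟨∅, ?_, fun u _ _ => Subsingleton.elim _ _⟩
      simp only [Finset.card_empty, Nat.cast_zero]
      positivity
    obtain ⟨T, hTcard, hcover⟩ := hZ.exists_finset_card_le_pow_cover (by linarith) x one_pos (n + 1)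
    refine ⟨T, hTcard, fun u hu hTu => (hV u hu).eq_zero_of_eq_zero_on_net (by linarith) one_pos ?_
      hcover hTu⟩
    rw [mul_one_div, div_lt_one (by positivity)]
    linarith
  obtain ⟨hfin, hrank⟩ := V.finiteDimensional_and_finrank_le_card_of_eq_zero_on T hT
  refine ⟨hfin, (Nat.cast_le.2 hrank).trans (hTcard.trans ?_)⟩
  calc C ^ (n + 1) = ((2 : ℝ) ^ (n + 1)) ^ Real.logb 2 C := by
        rw [← Real.rpow_pow_comm zero_le_two, Real.rpow_logb two_pos (by norm_num) (by linarith)]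
    _ ≤ (4 * K) ^ Real.logb 2 C := by
        gcongr
        · exact Real.logb_nonneg one_lt_two hC
        · rw [pow_succ]; linarith
end

section
/- Let (X,d,μ) be a metric measure space with μ Borel regular and doubling, admitting a p-Poincaré inequality with constant L ≥ 1 for some p ≥ 1. Then there is a constant C₁ < ∞, depending only on the doubling constant and L, with the following property: for every A < ∞, every ε > 0, every Lipschitz function u : X → ℝ, and every point x ∈ X which is an approximate continuity point of the function z ↦ lip_z u, there exists r₀ = r₀(u,x,A,ε) > 0 such that whenever 0 < r ≤ r₀ and y, y' ∈ B(x, A·r) satisfy d(y,y') ≤ r, then |⨍_{B(y,r)} u dμ − ⨍_{B(y',r)} u dμ| ≤ C₁·r·(lip_x u + ε). -/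
open Metric MeasureTheory Filter Set
open scoped NNReal ENNReal

/-- `g` is approximately continuous at `x`: there is a measurable set `A` having `x` as a
point of density such that `g` restricted to `A` is continuous at `x`. -/
def ApproxContinuousAt {X : Type*} [MetricSpace X] [MeasurableSpace X]
    (μ : Measure X) (g : X → ℝ) (x : X) : Prop :=
  ∃ A : Set X, MeasurableSet A ∧
    Filter.Tendsto (fun r : ℝ => μ (Metric.ball x r \ A) / μ (Metric.ball x r))
      (nhdsWithin 0 (Set.Ioi (0:ℝ))) (nhds 0) ∧
    ContinuousWithinAt g A x

/-
The Poincaré inequality on `B(y, 2r)` bounds the mean oscillation of `u` there by `2Lr` times the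
`L^p` average of `lip u` over `B(y, 2Lr)`, and doubling compares the averages over `B(y, r)` and
`B(y', r)` with the one over `B(y, 2r)`. By doubling, the balls `B(y, 2Lr)` with `y ∈ B(x, Ar)`
inherit from `B(x, (A + 2L)r)` that the set `S` witnessing approximate continuity fills almost
all of them. Near `x` on `S` we have `lip u < lip_x u + ε`, and off `S` still `lip u ≤ Lip u`, so
for small `r` the `L^p` average of `lip u` over `B(y, 2Lr)` is at most `lip_x u + ε`.
-/

open Topology

section LipschitzConstants

variable {X : Type*} [MetricSpace X] {f : X → ℝ} {K : ℝ≥0}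

theorem LipschitzWith.varBall_mem_Icc (hf : LipschitzWith K f) (x : X) {r : ℝ} (hr : 0 < r) :
    varBall f x r ∈ Icc 0 (K : ℝ) := by
  have hle : ∀ y ∈ ball x r, |f y - f x| / r ≤ K := fun y hy => by
    rw [div_le_iff₀ hr, ← Real.dist_eq]
    exact (hf.dist_le_mul y x).trans (by gcongr; exact (mem_ball.mp hy).le)
  refine ⟨le_csSup ⟨K, ?_⟩ ⟨x, mem_ball_self hr, by simp⟩, Real.sSup_le ?_ K.coe_nonneg⟩
  all_goals rintro _ ⟨y, hy, rfl⟩; exact hle y hy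

theorem LipschitzWith.lipLow_mem_Icc (hf : LipschitzWith K f) (x : X) :
    lipLow f x ∈ Icc 0 (K : ℝ) := by
  have hmem : ∀ᶠ r in 𝓝[>] (0 : ℝ), varBall f x r ∈ Icc 0 (K : ℝ) :=
    eventually_nhdsWithin_of_forall fun r hr => hf.varBall_mem_Icc x hr
  have hge : IsBoundedUnder (· ≥ ·) (𝓝[>] (0 : ℝ)) (varBall f x) :=
    isBoundedUnder_of_eventually_ge (hmem.mono fun _ h => h.1)
  have hle : IsBoundedUnder (· ≤ ·) (𝓝[>] (0 : ℝ)) (varBall f x) :=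
    isBoundedUnder_of_eventually_le (hmem.mono fun _ h => h.2)
  exact ⟨le_liminf_of_le hle.isCoboundedUnder_ge (hmem.mono fun _ h => h.1),
    liminf_le_of_le hge fun b hb => (hb.and hmem).exists.elim fun _ h => h.1.trans h.2.2⟩

end LipschitzConstants

theorem LipschitzWith.integrableOn_of_isBounded {X : Type*} [MetricSpace X] [MeasurableSpace X]
    [OpensMeasurableSpace X] {μ : Measure X} {f : X → ℝ} {K : ℝ≥0} (hf : LipschitzWith K f)
    {s : Set X} (hs_meas : MeasurableSet s) (hs : Bornology.IsBounded s) (hμs : μ s ≠ ⊤) :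
    IntegrableOn f s μ := by
  obtain ⟨M, hM⟩ := (hf.isBounded_image hs).exists_norm_le
  exact Measure.integrableOn_of_bounded hμs hf.continuous.aestronglyMeasurable
    (ae_restrict_of_forall_mem hs_meas fun z hz => hM _ (mem_image_of_mem f hz))

section Averages

variable {α : Type*} [MeasurableSpace α] {μ : Measure α} {s B : Set α}

theorem abs_setAverage_sub_le (hs₀ : μ s ≠ 0) (hs : μ s ≠ ⊤) {u : α → ℝ}
    (hu : IntegrableOn u s μ) (c : ℝ) :
    |⨍ z in s, u z ∂μ - c| ≤ ⨍ z in s, |u z - c| ∂μ := by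
  have hs_real : μ.real s ≠ 0 := ENNReal.toReal_ne_zero.mpr ⟨hs₀, hs⟩
  have hsub : ⨍ z in s, u z ∂μ - c = (μ.real s)⁻¹ * ∫ z in s, (u z - c) ∂μ := by
    rw [integral_sub hu (integrableOn_const hs), setIntegral_const, setAverage_eq, smul_eq_mul,
      smul_eq_mul]
    field_simp
  rw [hsub, setAverage_eq, smul_eq_mul, abs_mul,
    abs_of_nonneg (inv_nonneg.mpr measureReal_nonneg)]
  gcongr
  exact abs_integral_le_integral_abs

theorem setAverage_le_mul_setAverage_of_subset {f : α → ℝ} (hf₀ : ∀ z, 0 ≤ f z)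
    (hf : IntegrableOn f B μ) (hsB : s ⊆ B) (hs₀ : μ s ≠ 0) (hB : μ B ≠ ⊤) {C : ℝ≥0}
    (hμ : μ B ≤ C * μ s) : ⨍ z in s, f z ∂μ ≤ C * ⨍ z in B, f z ∂μ := by
  have hs : μ s ≠ ⊤ := ne_top_of_le_ne_top hB (measure_mono hsB)
  have hs_real : 0 < μ.real s := ENNReal.toReal_pos hs₀ hs
  have hB_real : μ.real B ≠ 0 := (hs_real.trans_le (measureReal_mono hsB hB)).ne'
  have hμ_real : μ.real B ≤ C * μ.real s := by
    simpa [measureReal_def] using ENNReal.toReal_mono (by finiteness) hμ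
  have hint : ∫ z in s, f z ∂μ ≤ ∫ z in B, f z ∂μ :=
    setIntegral_mono_set hf (ae_of_all _ hf₀) (ae_of_all _ hsB)
  have hint₀ : 0 ≤ ∫ z in B, f z ∂μ := integral_nonneg hf₀
  rw [setAverage_eq, setAverage_eq, smul_eq_mul, smul_eq_mul, inv_mul_le_iff₀ hs_real]
  calc ∫ z in s, f z ∂μ ≤ ∫ z in B, f z ∂μ := hint
    _ = μ.real B * ((μ.real B)⁻¹ * ∫ z in B, f z ∂μ) := by field_simp
    _ ≤ C * μ.real s * ((μ.real B)⁻¹ * ∫ z in B, f z ∂μ) := by gcongr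
    _ = μ.real s * (C * ((μ.real B)⁻¹ * ∫ z in B, f z ∂μ)) := by ring

theorem abs_setAverage_sub_setAverage_le {u : α → ℝ} (hu : IntegrableOn u B μ) (hsB : s ⊆ B)
    (hs₀ : μ s ≠ 0) (hB : μ B ≠ ⊤) {C : ℝ≥0} (hμ : μ B ≤ C * μ s) :
    |⨍ z in s, u z ∂μ - ⨍ z in B, u z ∂μ| ≤
      C * ⨍ z in B, |u z - ⨍ w in B, u w ∂μ| ∂μ :=
  (abs_setAverage_sub_le hs₀ (ne_top_of_le_ne_top hB (measure_mono hsB))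
    (hu.mono_set hsB) _).trans
    (setAverage_le_mul_setAverage_of_subset (fun _ => abs_nonneg _)
      (hu.sub (integrableOn_const hB)).abs hsB hs₀ hB hμ)

-- No integrability is assumed, as `lip u` is not known to be measurable; a non-integrable `f`
-- has average `0` by convention.
theorem setAverage_le_of_le_on_of_measure_diff_le {S : Set α} {f : α → ℝ} (hB : MeasurableSet B)
    (hS : MeasurableSet S) (hμB : μ B ≠ ⊤) {a M η : ℝ} (ha : 0 ≤ a) (hM : 0 ≤ M) (hη : 0 ≤ η)
    (hfS : ∀ z ∈ B ∩ S, f z ≤ a) (hfM : ∀ z ∈ B, f z ≤ M)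
    (hBS : μ (B \ S) ≤ ENNReal.ofReal η * μ B) :
    ⨍ z in B, f z ∂μ ≤ a + M * η := by
  by_cases hf : IntegrableOn f B μ
  swap
  · rw [setAverage_eq, integral_undef hf, smul_zero]
    positivity
  have hconst : IntegrableOn (fun _ => a) B μ := integrableOn_const hμB
  have hind : IntegrableOn (Sᶜ.indicator fun _ => M) B μ :=
    (integrableOn_const hμB).indicator hS.compl
  have hle : ∀ z ∈ B, f z ≤ a + Sᶜ.indicator (fun _ => M) z := fun z hz => by
    by_cases hzS : z ∈ S
    · simpa [hzS] using hfS z ⟨hz, hzS⟩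
    · simpa [hzS] using (hfM z hz).trans (le_add_of_nonneg_left ha)
  have hBS_real : μ.real (B \ S) ≤ η * μ.real B := by
    simpa [measureReal_def, hη] using ENNReal.toReal_mono (by finiteness) hBS
  have hint : ∫ z in B, f z ∂μ ≤ (a + M * η) * μ.real B :=
    calc ∫ z in B, f z ∂μ ≤ ∫ z in B, (a + Sᶜ.indicator (fun _ => M) z) ∂μ :=
          setIntegral_mono_on hf (hconst.add hind) hB hle
      _ = a * μ.real B + M * μ.real (B \ S) := by
          rw [integral_add hconst hind, setIntegral_const,
            setIntegral_indicator hS.compl, setIntegral_const, ← sdiff_eq, smul_eq_mul,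
            smul_eq_mul, mul_comm, mul_comm M]
      _ ≤ (a + M * η) * μ.real B := by nlinarith
  rw [setAverage_eq, smul_eq_mul]
  rcases measureReal_nonneg.eq_or_lt with h0 | hpos
  · rw [← h0, inv_zero, zero_mul]
    positivity
  · rwa [inv_mul_le_iff₀ hpos, mul_comm]

end Averages

theorem tendsto_const_mul_nhdsGT_zero {c : ℝ} (hc : 0 < c) :
    Tendsto (fun r => c * r) (𝓝[>] 0) (𝓝[>] 0) :=
  tendsto_nhdsWithin_iff.mpr
    ⟨((continuous_const.mul continuous_id).tendsto' 0 0 (by simp)).mono_left nhdsWithin_le_nhds,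
      eventually_nhdsWithin_of_forall fun _ hr => mul_pos hc hr⟩

namespace DoublingWith

variable {X : Type*} [MetricSpace X] [MeasurableSpace X] {μ : Measure X} {C : ℝ≥0}

theorem measure_ball_two_pow_mul_le (hd : DoublingWith μ C) (y : X) {s : ℝ} (hs : 0 < s)
    (m : ℕ) : μ (ball y (2 ^ m * s)) ≤ C ^ m * μ (ball y s) := by
  induction m with
  | zero => simp
  | succ n ih =>
    calc μ (ball y (2 ^ (n + 1) * s)) = μ (ball y (2 * (2 ^ n * s))) := by ring_nf
      _ ≤ C * μ (ball y (2 ^ n * s)) := hd y _ (by positivity)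
      _ ≤ C * (C ^ n * μ (ball y s)) := by gcongr
      _ = C ^ (n + 1) * μ (ball y s) := by ring

theorem ne_zero (hd : DoublingWith μ C) {x : X} {r : ℝ} (hr : 0 < r)
    (hx : μ (ball x (2 * r)) ≠ 0) : C ≠ 0 := by
  rintro rfl
  exact hx (le_zero_iff.mp (by simpa using hd x r hr))

theorem abs_setAverage_ball_sub_setAverage_ball_le (hd : DoublingWith μ C) {u : X → ℝ}
    {y y' : X} {r : ℝ} (hu : IntegrableOn u (ball y (2 * r)) μ) (hr : 0 < r)
    (hyy' : dist y y' ≤ r) (hy : μ (ball y r) ≠ 0) (hy' : μ (ball y' r) ≠ 0)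
    (hfin : μ (ball y (2 * r)) ≠ ⊤) :
    |⨍ z in ball y r, u z ∂μ - ⨍ z in ball y' r, u z ∂μ| ≤
      (C + C ^ 2) * ⨍ z in ball y (2 * r), |u z - ⨍ w in ball y (2 * r), u w ∂μ| ∂μ := by
  have hy_sub : ball y r ⊆ ball y (2 * r) := ball_subset_ball (by linarith)
  have hy'_sub : ball y' r ⊆ ball y (2 * r) :=
    ball_subset_ball' (by rw [dist_comm]; linarith)
  have hμy' : μ (ball y (2 * r)) ≤ (C ^ 2 : ℝ≥0) * μ (ball y' r) := by
    calc μ (ball y (2 * r)) ≤ μ (ball y' (2 ^ 2 * r)) :=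
          measure_mono (ball_subset_ball' (by linarith))
      _ ≤ _ := by simpa using hd.measure_ball_two_pow_mul_le y' hr 2
  have htri := abs_sub_le (⨍ z in ball y r, u z ∂μ) (⨍ z in ball y (2 * r), u z ∂μ)
    (⨍ z in ball y' r, u z ∂μ)
  rw [abs_sub_comm (⨍ z in ball y (2 * r), u z ∂μ)] at htri
  calc _ ≤ _ := htri
    _ ≤ C * ⨍ z in ball y (2 * r), |u z - ⨍ w in ball y (2 * r), u w ∂μ| ∂μ +
          (C ^ 2 : ℝ≥0) * ⨍ z in ball y (2 * r), |u z - ⨍ w in ball y (2 * r), u w ∂μ| ∂μ :=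
        add_le_add (abs_setAverage_sub_setAverage_le hu hy_sub hy hfin (hd y r hr))
          (abs_setAverage_sub_setAverage_le hu hy'_sub hy' hfin hμy')
    _ = _ := by push_cast; ring

theorem eventually_measure_ball_diff_le (hd : DoublingWith μ C)
    (hμ : ∀ z ρ, 0 < ρ → 0 < μ (ball z ρ) ∧ μ (ball z ρ) < ⊤) {S : Set X} {x : X}
    (hS : Tendsto (fun r => μ (ball x r \ S) / μ (ball x r)) (𝓝[>] 0) (𝓝 0))
    {κ τ : ℝ} (hκ : 0 ≤ κ) (hτ : 0 < τ) {η : ℝ≥0∞} (hη : 0 < η) :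
    ∀ᶠ r in 𝓝[>] 0, ∀ y ∈ ball x (κ * r),
      μ (ball y (τ * r) \ S) ≤ η * μ (ball y (τ * r)) := by
  -- `B(y, τr) ⊆ B(x, (κ + τ)r) ⊆ B(y, 2^m τr)`, so the density of `S` at `x` transfers to `y`
  -- at the cost of the factor `C^m`.
  obtain ⟨m, hm⟩ := pow_unbounded_of_one_lt ((2 * κ + τ) / τ) one_lt_two
  rw [div_lt_iff₀ hτ] at hm
  have hC : (C : ℝ≥0∞) ^ m ≠ 0 :=
    pow_ne_zero _ (ENNReal.coe_ne_zero.mpr (hd.ne_zero one_pos (hμ x (2 * 1) (by norm_num)).1.ne'))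
  have hsmall : ∀ᶠ r in 𝓝[>] 0, μ (ball x ((κ + τ) * r) \ S) / μ (ball x ((κ + τ) * r)) <
      η / C ^ m :=
    (tendsto_const_mul_nhdsGT_zero (by linarith)).eventually
      (hS.eventually (gt_mem_nhds (ENNReal.div_pos hη.ne' (by finiteness))))
  filter_upwards [self_mem_nhdsWithin, hsmall] with r (hr : 0 < r) hr_small y hy
  have hyx : dist y x < κ * r := mem_ball.mp hy
  have hρ := hμ x ((κ + τ) * r) (by positivity)
  rw [ENNReal.div_lt_iff (Or.inl hρ.1.ne') (Or.inl hρ.2.ne)] at hr_small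
  calc μ (ball y (τ * r) \ S) ≤ μ (ball x ((κ + τ) * r) \ S) :=
        measure_mono (sdiff_subset_sdiff_left (ball_subset_ball' (by nlinarith)))
    _ ≤ η / C ^ m * μ (ball x ((κ + τ) * r)) := hr_small.le
    _ ≤ η / C ^ m * μ (ball y (2 ^ m * (τ * r))) :=
        by gcongr; exact ball_subset_ball' (by rw [dist_comm]; nlinarith)
    _ ≤ η / C ^ m * (C ^ m * μ (ball y (τ * r))) := by
        gcongr; exact hd.measure_ball_two_pow_mul_le y (by positivity) m
    _ = η * μ (ball y (τ * r)) := by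
        rw [← mul_assoc, ENNReal.div_mul_cancel hC (by finiteness)]

end DoublingWith

namespace ApproxContinuousAt

variable {X : Type*} [MetricSpace X] [MeasurableSpace X] {μ : Measure X} {g : X → ℝ} {x : X}

theorem comp_continuousAt (hg : ApproxContinuousAt μ g x) {φ : ℝ → ℝ}
    (hφ : ContinuousAt φ (g x)) : ApproxContinuousAt μ (fun z => φ (g z)) x :=
  let ⟨S, hS, hdens, hcont⟩ := hg
  ⟨S, hS, hdens, hφ.comp_continuousWithinAt hcont⟩

theorem eventually_setAverage_ball_le [OpensMeasurableSpace X] (hg : ApproxContinuousAt μ g x)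
    (hg₀ : ∀ z, 0 ≤ g z) {M : ℝ} (hgM : ∀ z, g z ≤ M) {C : ℝ≥0} (hd : DoublingWith μ C)
    (hμ : ∀ z ρ, 0 < ρ → 0 < μ (ball z ρ) ∧ μ (ball z ρ) < ⊤) {κ τ : ℝ} (hκ : 0 ≤ κ)
    (hτ : 0 < τ) {ε : ℝ} (hε : 0 < ε) :
    ∀ᶠ r in 𝓝[>] 0, ∀ y ∈ ball x (κ * r), ⨍ z in ball y (τ * r), g z ∂μ ≤ g x + ε := by
  obtain ⟨S, hS, hdens, hcont⟩ := hg
  obtain ⟨δ, hδ, hδS⟩ := Metric.mem_nhdsWithin_iff.mp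
    (hcont (Iio_mem_nhds (lt_add_of_pos_right (g x) (half_pos hε))))
  have hM : 0 ≤ M := (hg₀ x).trans (hgM x)
  have hη : 0 < ε / 2 / (M + 1) := by positivity
  have hclose : ∀ᶠ r in 𝓝[>] 0, (κ + τ) * r < δ :=
    (tendsto_const_mul_nhdsGT_zero (by linarith)).eventually
      (mem_of_superset (Ioo_mem_nhdsGT hδ) fun _ h => h.2)
  filter_upwards [self_mem_nhdsWithin, hclose,
    hd.eventually_measure_ball_diff_le hμ hdens hκ hτ (ENNReal.ofReal_pos.mpr hη)]
    with r (hr : 0 < r) hrδ hdiff y hy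
  have hball : ball y (τ * r) ⊆ ball x δ :=
    ball_subset_ball' (by linarith [mem_ball.mp hy])
  calc ⨍ z in ball y (τ * r), g z ∂μ ≤ (g x + ε / 2) + M * (ε / 2 / (M + 1)) :=
        setAverage_le_of_le_on_of_measure_diff_le measurableSet_ball hS
          (hμ y _ (by positivity)).2.ne (by linarith [hg₀ x]) hM hη.le
          (fun z hz => (hδS ⟨hball hz.1, hz.2⟩).le) (fun z _ => hgM z) (hdiff y hy)
    _ ≤ g x + ε := by
        have : M * (ε / 2 / (M + 1)) ≤ ε / 2 := by
          rw [mul_div_assoc', div_le_iff₀ (by linarith)]; nlinarith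
        linarith

end ApproxContinuousAt

theorem LipschitzWith.eventually_rpow_setAverage_rpow_lipLow_le {X : Type*} [MetricSpace X]
    [MeasurableSpace X] [OpensMeasurableSpace X] {μ : Measure X} {u : X → ℝ} {K : ℝ≥0}
    (hu : LipschitzWith K u) {x : X} (hx : ApproxContinuousAt μ (lipLow u) x) {p : ℝ}
    (hp : 0 < p) {C : ℝ≥0} (hd : DoublingWith μ C)
    (hμ : ∀ z ρ, 0 < ρ → 0 < μ (ball z ρ) ∧ μ (ball z ρ) < ⊤) {κ τ : ℝ} (hκ : 0 ≤ κ)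
    (hτ : 0 < τ) {ε : ℝ} (hε : 0 < ε) :
    ∀ᶠ r in 𝓝[>] 0, ∀ y ∈ ball x (κ * r),
      (⨍ z in ball y (τ * r), lipLow u z ^ p ∂μ) ^ (1 / p) ≤ lipLow u x + ε := by
  have hl := hu.lipLow_mem_Icc
  -- the margin for `lip^p` that turns into the margin `ε` for `lip` after taking `p`-th roots
  have hgap : 0 < (lipLow u x + ε) ^ p - lipLow u x ^ p :=
    sub_pos.mpr (Real.rpow_lt_rpow (hl x).1 (by linarith) hp)
  filter_upwards [(hx.comp_continuousAt (Real.continuousAt_rpow_const _ p (Or.inr hp.le))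
    ).eventually_setAverage_ball_le (fun z => Real.rpow_nonneg (hl z).1 p)
    (fun z => Real.rpow_le_rpow (hl z).1 (hl z).2 hp.le) hd hμ hκ hτ hgap] with r hr y hy
  have havg₀ : 0 ≤ ⨍ z in ball y (τ * r), lipLow u z ^ p ∂μ := by
    rw [setAverage_eq, smul_eq_mul]
    exact mul_nonneg (inv_nonneg.mpr measureReal_nonneg)
      (integral_nonneg fun z => Real.rpow_nonneg (hl z).1 p)
  calc (⨍ z in ball y (τ * r), lipLow u z ^ p ∂μ) ^ (1 / p)
      ≤ ((lipLow u x + ε) ^ p) ^ (1 / p) :=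
        Real.rpow_le_rpow havg₀ (by linarith [hr y hy]) (by positivity)
    _ = lipLow u x + ε := by
        rw [one_div, Real.rpow_rpow_inv (by linarith [(hl x).1]) hp.ne']

/-- Lemma 7.3: comparison of averages of a Lipschitz function over nearby
balls near an approximate continuity point of `lip u`, in a doubling `p`-Poincaré space. -/
theorem avg_comparison_near_approx_continuity_point
    (Cμ : ℝ≥0) (L p : ℝ) (hL : 1 ≤ L) (hp : 1 ≤ p) :
    ∃ C₁ : ℝ, 0 < C₁ ∧ ∀ (X : Type) [MetricSpace X] [MeasurableSpace X] [BorelSpace X]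
      (μ : Measure X),
      DoublingWith μ Cμ → PoincareIneq μ p L →
      ∀ (A : ℝ) (ε : ℝ), 0 < A → 0 < ε →
      ∀ (u : X → ℝ), IsLip u →
      ∀ x : X, ApproxContinuousAt μ (fun z => lipLow u z) x →
      ∃ r₀ : ℝ, 0 < r₀ ∧ ∀ r : ℝ, 0 < r → r ≤ r₀ →
        ∀ y y' : X, y ∈ Metric.ball x (A * r) → y' ∈ Metric.ball x (A * r) →
          dist y y' ≤ r →
          |(⨍ z in Metric.ball y r, u z ∂μ) - ⨍ z in Metric.ball y' r, u z ∂μ| ≤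
            C₁ * r * (lipLow u x + ε) := by
  refine ⟨2 * L * (1 + Cμ) ^ 2, by positivity, ?_⟩
  intro X _ _ _ μ hd hP A ε hA hε u ⟨K, hu⟩ x hx
  have hμ := hP.1
  obtain ⟨r₀, hr₀, hsmall⟩ := mem_nhdsGT_iff_exists_Ioc_subset.mp
    (hu.eventually_rpow_setAverage_rpow_lipLow_le hx (by linarith : 0 < p) hd hμ hA.le
      (by linarith : 0 < 2 * L) hε)
  refine ⟨r₀, hr₀, fun r hr hrr₀ y y' hy _ hyy' => ?_⟩
  have h2r : 0 < 2 * r := by linarith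
  have hpoincare : ⨍ z in ball y (2 * r), |u z - ⨍ w in ball y (2 * r), u w ∂μ| ∂μ ≤
      L * (2 * r) * (lipLow u x + ε) := by
    refine (hP.2 u ⟨K, hu⟩ y (2 * r) h2r).trans ?_
    rw [show L * (2 * r) = 2 * L * r by ring]
    gcongr
    exact hsmall ⟨hr, hrr₀⟩ y hy
  have hCμ : (Cμ : ℝ) + Cμ ^ 2 ≤ (1 + Cμ) ^ 2 := by nlinarith [Cμ.coe_nonneg]
  have hlip : 0 ≤ lipLow u x + ε := by linarith [(hu.lipLow_mem_Icc x).1]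
  calc _ ≤ (Cμ + Cμ ^ 2) *
        ⨍ z in ball y (2 * r), |u z - ⨍ w in ball y (2 * r), u w ∂μ| ∂μ :=
        hd.abs_setAverage_ball_sub_setAverage_ball_le
          (hu.integrableOn_of_isBounded measurableSet_ball isBounded_ball (hμ y _ h2r).2.ne)
          hr hyy' (hμ y r hr).1.ne' (hμ y' r hr).1.ne' (hμ y _ h2r).2.ne
    _ ≤ (Cμ + Cμ ^ 2) * (L * (2 * r) * (lipLow u x + ε)) := by gcongr
    _ ≤ (1 + Cμ) ^ 2 * (L * (2 * r) * (lipLow u x + ε)) := by gcongr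
    _ = 2 * L * (1 + Cμ) ^ 2 * r * (lipLow u x + ε) := by ring
end
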